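/- arXiv:2109.14499 — 5 statements merged into one kernel-verified Lean document; each statement's English description precedes it below -/
import Mathlib

section
/- Let T be the tree with vertices u1,u2,u3,u4,u5,u'3,u''3 consisting of the path u1,u3,u4,u5 together with a path u2,u3,u'3,u''3 through u3 (so u3 has neighbors u1,u2,u4,u'3, and u'3 has neighbor u''3). If L is a list assignment with |L(u1)| ≥ 3, |L(u2)| ≥ 2, |L(u3)| ≥ 3, |L(u4)| ≥ 5, |L(u5)| ≥ 2, |L(u'3)| ≥ 5, |L(u''3)| ≥ 2, then T admits a 2-distance L-coloring. -/
/-- The tree of the corresponding configuration, with vertices 0 = u1, 1 = u2, 2 = u3, 3 = u4, 4 = u5, 5 = u'3, 6 = u''3. -/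
def T6 : SimpleGraph (Fin 7) :=
  SimpleGraph.fromRel (fun u v => (u = 0 ∧ v = 2) ∨ (u = 1 ∧ v = 2) ∨ (u = 2 ∧ v = 3) ∨ (u = 3 ∧ v = 4) ∨ (u = 2 ∧ v = 5) ∨ (u = 5 ∧ v = 6))

instance : DecidableRel T6.Adj := fun u v =>
  decidable_of_iff _ (SimpleGraph.fromRel_adj _ u v).symm

private lemma cle1 (a : ℕ) : ({a} : Finset ℕ).card ≤ 1 := le_of_eq (Finset.card_singleton a)
private lemma cle2 (a b : ℕ) : ({a,b} : Finset ℕ).card ≤ 2 :=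
  (Finset.card_insert_le _ _).trans (by simp)
private lemma cle3 (a b c : ℕ) : ({a,b,c} : Finset ℕ).card ≤ 3 :=
  (Finset.card_insert_le _ _).trans (by have := cle2 b c; omega)
private lemma cle4 (a b c d : ℕ) : ({a,b,c,d} : Finset ℕ).card ≤ 4 :=
  (Finset.card_insert_le _ _).trans (by have := cle3 b c d; omega)

private lemma pick1 (s : Finset ℕ) (h : 2 ≤ s.card) (a : ℕ) :
    ∃ x, x ∈ s ∧ x ≠ a := by
  have hne : (s \ {a}).Nonempty := by
    apply Finset.card_pos.mp
    have h1 := Finset.le_card_sdiff ({a} : Finset ℕ) s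
    have h2 := cle1 a
    omega
  obtain ⟨x, hx⟩ := hne
  simp only [Finset.mem_sdiff, Finset.mem_singleton] at hx
  exact ⟨x, hx.1, hx.2⟩

private lemma pick2 (s : Finset ℕ) (h : 3 ≤ s.card) (a b : ℕ) :
    ∃ x, x ∈ s ∧ x ≠ a ∧ x ≠ b := by
  have hne : (s \ {a,b}).Nonempty := by
    apply Finset.card_pos.mp
    have h1 := Finset.le_card_sdiff ({a,b} : Finset ℕ) s
    have h2 := cle2 a b
    omega
  obtain ⟨x, hx⟩ := hne
  simp only [Finset.mem_sdiff, Finset.mem_insert, Finset.mem_singleton, not_or] at hx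
  exact ⟨x, hx.1, hx.2.1, hx.2.2⟩

private lemma pick3 (s : Finset ℕ) (h : 4 ≤ s.card) (a b c : ℕ) :
    ∃ x, x ∈ s ∧ x ≠ a ∧ x ≠ b ∧ x ≠ c := by
  have hne : (s \ {a,b,c}).Nonempty := by
    apply Finset.card_pos.mp
    have h1 := Finset.le_card_sdiff ({a,b,c} : Finset ℕ) s
    have h2 := cle3 a b c
    omega
  obtain ⟨x, hx⟩ := hne
  simp only [Finset.mem_sdiff, Finset.mem_insert, Finset.mem_singleton, not_or] at hx
  exact ⟨x, hx.1, hx.2.1, hx.2.2.1, hx.2.2.2⟩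

private lemma pick4 (s : Finset ℕ) (h : 5 ≤ s.card) (a b c d : ℕ) :
    ∃ x, x ∈ s ∧ x ≠ a ∧ x ≠ b ∧ x ≠ c ∧ x ≠ d := by
  have hne : (s \ {a,b,c,d}).Nonempty := by
    apply Finset.card_pos.mp
    have h1 := Finset.le_card_sdiff ({a,b,c,d} : Finset ℕ) s
    have h2 := cle4 a b c d
    omega
  obtain ⟨x, hx⟩ := hne
  simp only [Finset.mem_sdiff, Finset.mem_insert, Finset.mem_singleton, not_or] at hx
  exact ⟨x, hx.1, hx.2.1, hx.2.2.1, hx.2.2.2.1, hx.2.2.2.2⟩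

/-- Assembling a coloring from seven values with all required distinctness facts. -/
private theorem finishT6 (L : Fin 7 → Finset ℕ) (c0 c1 c2 c3 c4 c5 c6 : ℕ)
    (m0 : c0 ∈ L 0) (m1 : c1 ∈ L 1) (m2 : c2 ∈ L 2) (m3 : c3 ∈ L 3)
    (m4 : c4 ∈ L 4) (m5 : c5 ∈ L 5) (m6 : c6 ∈ L 6)
    (d01 : c0 ≠ c1) (d02 : c0 ≠ c2) (d03 : c0 ≠ c3) (d05 : c0 ≠ c5)
    (d12 : c1 ≠ c2) (d13 : c1 ≠ c3) (d15 : c1 ≠ c5)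
    (d23 : c2 ≠ c3) (d25 : c2 ≠ c5) (d35 : c3 ≠ c5)
    (d24 : c2 ≠ c4) (d34 : c3 ≠ c4) (d26 : c2 ≠ c6) (d56 : c5 ≠ c6) :
    ∃ φ : Fin 7 → ℕ, (∀ v, φ v ∈ L v) ∧
      ∀ u v : Fin 7, u ≠ v →
        (T6.Adj u v ∨ ∃ w, T6.Adj u w ∧ T6.Adj w v) → φ u ≠ φ v := by
  have d10 := d01.symm; have d20 := d02.symm; have d30 := d03.symm; have d50 := d05.symm
  have d21 := d12.symm; have d31 := d13.symm; have d51 := d15.symm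
  have d32 := d23.symm; have d52 := d25.symm; have d53 := d35.symm
  have d42 := d24.symm; have d43 := d34.symm; have d62 := d26.symm; have d65 := d56.symm
  refine ⟨![c0,c1,c2,c3,c4,c5,c6], ?_, ?_⟩
  · intro v; fin_cases v <;> simpa
  · intro u v huv h
    fin_cases u <;> fin_cases v <;>
      first
        | exact absurd rfl huv
        | exact absurd h (by decide)
        | assumption

/-- The easy extension: if the color of vertex 2 lies in neither pendant list,
greedy coloring finishes. -/
private theorem easyT6 (L : Fin 7 → Finset ℕ)
    (h3 : 5 ≤ (L 3).card) (h4 : 2 ≤ (L 4).card)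
    (h5 : 5 ≤ (L 5).card) (h6 : 2 ≤ (L 6).card)
    (a0 a1 a2 : ℕ) (m0 : a0 ∈ L 0) (m1 : a1 ∈ L 1) (m2 : a2 ∈ L 2)
    (d01 : a0 ≠ a1) (d02 : a0 ≠ a2) (d12 : a1 ≠ a2)
    (hn4 : a2 ∉ L 4) (hn6 : a2 ∉ L 6) :
    ∃ φ : Fin 7 → ℕ, (∀ v, φ v ∈ L v) ∧
      ∀ u v : Fin 7, u ≠ v →
        (T6.Adj u v ∨ ∃ w, T6.Adj u w ∧ T6.Adj w v) → φ u ≠ φ v := by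
  obtain ⟨c3, hc3, hc30, hc31, hc32⟩ := pick3 (L 3) (by omega) a0 a1 a2
  obtain ⟨c5, hc5, hc50, hc51, hc52, hc53⟩ := pick4 (L 5) h5 a0 a1 a2 c3
  obtain ⟨c4, hc4, hc43⟩ := pick1 (L 4) h4 c3
  obtain ⟨c6, hc6, hc65⟩ := pick1 (L 6) h6 c5
  exact finishT6 L a0 a1 a2 c3 c4 c5 c6 m0 m1 m2 hc3 hc4 hc5 hc6
    d01 d02 hc30.symm hc50.symm d12 hc31.symm hc51.symm
    hc32.symm hc52.symm (fun e => hc53 e.symm)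
    (fun e => hn4 (e ▸ hc4)) (fun e => hc43 e.symm)
    (fun e => hn6 (e ▸ hc6)) (fun e => hc65 e.symm)

/-- Among any two distinct candidate colors for vertex 3, at least one admits
compatible choices at vertices 5 and 6. -/
private theorem goodT6 (L5 L6 : Finset ℕ) (h5 : 5 ≤ L5.card) (h6 : 2 ≤ L6.card)
    (c0 c1 c2 a b : ℕ) (hab : a ≠ b) :
    (∃ c5, c5 ∈ L5 ∧ c5 ≠ c0 ∧ c5 ≠ c1 ∧ c5 ≠ c2 ∧ c5 ≠ a ∧
      ∃ c6, c6 ∈ L6 ∧ c6 ≠ c2 ∧ c6 ≠ c5) ∨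
    (∃ c5, c5 ∈ L5 ∧ c5 ≠ c0 ∧ c5 ≠ c1 ∧ c5 ≠ c2 ∧ c5 ≠ b ∧
      ∃ c6, c6 ∈ L6 ∧ c6 ≠ c2 ∧ c6 ≠ c5) := by
  by_contra hcon
  push_neg at hcon
  obtain ⟨ha, hb⟩ := hcon
  obtain ⟨e, he, hec⟩ := pick1 L6 h6 c2
  obtain ⟨s, hs, hs0, hs1, hs2, hse⟩ := pick4 L5 h5 c0 c1 c2 e
  rcases eq_or_ne s a with rfl | hsa
  · exact hse (hb s hs hs0 hs1 hs2 (hab) e he hec).symm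
  · exact hse (ha s hs hs0 hs1 hs2 hsa e he hec).symm

/-- The configuration admits a 2-distance coloring from the given lists. -/
theorem colorable_ii (L : Fin 7 → Finset ℕ)
    (h0 : 3 ≤ (L 0).card)
    (h1 : 2 ≤ (L 1).card)
    (h2 : 3 ≤ (L 2).card)
    (h3 : 5 ≤ (L 3).card)
    (h4 : 2 ≤ (L 4).card)
    (h5 : 5 ≤ (L 5).card)
    (h6 : 2 ≤ (L 6).card) :
    ∃ φ : Fin 7 → ℕ, (∀ v, φ v ∈ L v) ∧
      ∀ u v : Fin 7, u ≠ v →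
        (T6.Adj u v ∨ ∃ w, T6.Adj u w ∧ T6.Adj w v) → φ u ≠ φ v := by
  obtain ⟨c1, hc1⟩ := Finset.card_pos.mp (by omega : 0 < (L 1).card)
  obtain ⟨c0, hc0, hc01⟩ := pick1 (L 0) (by omega) c1
  obtain ⟨c2, hc2, hc20, hc21⟩ := pick2 (L 2) h2 c0 c1
  have step : ∀ c3, c3 ∈ L 3 → c3 ≠ c0 → c3 ≠ c1 → c3 ≠ c2 →
      (∃ c5, c5 ∈ L 5 ∧ c5 ≠ c0 ∧ c5 ≠ c1 ∧ c5 ≠ c2 ∧ c5 ≠ c3 ∧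
        ∃ c6, c6 ∈ L 6 ∧ c6 ≠ c2 ∧ c6 ≠ c5) →
      (∃ c4, c4 ∈ L 4 ∧ c4 ≠ c2 ∧ c4 ≠ c3) →
      ∃ φ : Fin 7 → ℕ, (∀ v, φ v ∈ L v) ∧
        ∀ u v : Fin 7, u ≠ v →
          (T6.Adj u v ∨ ∃ w, T6.Adj u w ∧ T6.Adj w v) → φ u ≠ φ v := by
    rintro c3 m3 e30 e31 e32 ⟨c5, m5, e50, e51, e52, e53, c6, m6, e62, e65⟩ ⟨c4, m4, e42, e43⟩
    exact finishT6 L c0 c1 c2 c3 c4 c5 c6 hc0 hc1 hc2 m3 m4 m5 m6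
      hc01 hc20.symm e30.symm e50.symm hc21.symm e31.symm e51.symm
      e32.symm e52.symm e53.symm e42.symm e43.symm e62.symm e65.symm
  have stepPair : ∀ t t' : ℕ, t ≠ t' →
      (t ∈ L 3 ∧ t ≠ c0 ∧ t ≠ c1 ∧ t ≠ c2 ∧ ∃ c4, c4 ∈ L 4 ∧ c4 ≠ c2 ∧ c4 ≠ t) →
      (t' ∈ L 3 ∧ t' ≠ c0 ∧ t' ≠ c1 ∧ t' ≠ c2 ∧ ∃ c4, c4 ∈ L 4 ∧ c4 ≠ c2 ∧ c4 ≠ t') →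
      ∃ φ : Fin 7 → ℕ, (∀ v, φ v ∈ L v) ∧
        ∀ u v : Fin 7, u ≠ v →
          (T6.Adj u v ∨ ∃ w, T6.Adj u w ∧ T6.Adj w v) → φ u ≠ φ v := by
    rintro t t' htt ⟨m3, e0, e1, e2, h4t⟩ ⟨m3', e0', e1', e2', h4t'⟩
    rcases goodT6 (L 5) (L 6) h5 h6 c0 c1 c2 t t' htt with hg | hg
    · exact step t m3 e0 e1 e2 hg h4t
    · exact step t' m3' e0' e1' e2' hg h4t'
  by_cases hA : 2 ≤ (L 4 \ {c2}).card
  · have hcard : 1 < (L 3 \ {c0,c1,c2}).card := by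
      have ha := Finset.le_card_sdiff ({c0,c1,c2} : Finset ℕ) (L 3)
      have hb := cle3 c0 c1 c2
      omega
    obtain ⟨t, ht, t', ht', htt⟩ := Finset.one_lt_card.mp hcard
    simp only [Finset.mem_sdiff, Finset.mem_insert, Finset.mem_singleton, not_or] at ht ht'
    have get4 : ∀ s : ℕ, ∃ c4, c4 ∈ L 4 ∧ c4 ≠ c2 ∧ c4 ≠ s := by
      intro s
      obtain ⟨c4, hc4, hc4s⟩ := pick1 (L 4 \ {c2}) hA s
      simp only [Finset.mem_sdiff, Finset.mem_singleton] at hc4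
      exact ⟨c4, hc4.1, hc4.2, hc4s⟩
    exact stepPair t t' htt ⟨ht.1, ht.2.1, ht.2.2.1, ht.2.2.2, get4 t⟩
      ⟨ht'.1, ht'.2.1, ht'.2.2.1, ht'.2.2.2, get4 t'⟩
  · have hb1 : (L 4 \ {c2}).card = 1 := by
      have ha := Finset.le_card_sdiff ({c2} : Finset ℕ) (L 4)
      have hbb := cle1 c2
      omega
    obtain ⟨b, hbeq⟩ := Finset.card_eq_one.mp hb1
    have hbmem : b ∈ L 4 ∧ b ≠ c2 := by
      have : b ∈ L 4 \ {c2} := hbeq ▸ Finset.mem_singleton_self b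
      simpa using this
    have hc2L4 : c2 ∈ L 4 := by
      by_contra hcc
      have heq : L 4 \ {c2} = L 4 := Finset.sdiff_eq_self_iff_disjoint.mpr (by simpa)
      rw [heq] at hb1
      omega
    have hL4 : ∀ f ∈ L 4, f = c2 ∨ f = b := by
      intro f hf
      by_cases hfc : f = c2
      · exact Or.inl hfc
      · right
        have : f ∈ L 4 \ {c2} := Finset.mem_sdiff.mpr ⟨hf, by simpa⟩
        rw [hbeq] at this
        simpa using this
    by_cases hO : 2 ≤ (L 3 \ {c0,c1,c2,b}).card
    · obtain ⟨t, ht, t', ht', htt⟩ := Finset.one_lt_card.mp hO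
      simp only [Finset.mem_sdiff, Finset.mem_insert, Finset.mem_singleton, not_or] at ht ht'
      exact stepPair t t' htt
        ⟨ht.1, ht.2.1, ht.2.2.1, ht.2.2.2.1, b, hbmem.1, hbmem.2, fun h => ht.2.2.2.2 h.symm⟩
        ⟨ht'.1, ht'.2.1, ht'.2.2.1, ht'.2.2.2.1, b, hbmem.1, hbmem.2, fun h => ht'.2.2.2.2 h.symm⟩
    · have hO1 : (L 3 \ {c0,c1,c2,b}).card = 1 := by
        have ha := Finset.le_card_sdiff ({c0,c1,c2,b} : Finset ℕ) (L 3)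
        have hbb := cle4 c0 c1 c2 b
        omega
      obtain ⟨y, hyeq⟩ := Finset.card_eq_one.mp hO1
      have hy : y ∈ L 3 ∧ ¬(y = c0 ∨ y = c1 ∨ y = c2 ∨ y = b) := by
        have : y ∈ L 3 \ {c0,c1,c2,b} := hyeq ▸ Finset.mem_singleton_self y
        simpa only [Finset.mem_sdiff, Finset.mem_insert, Finset.mem_singleton] using this
      obtain ⟨hy3, hyne⟩ := hy
      push_neg at hyne
      obtain ⟨hy0, hy1, hy2, hyb⟩ := hyne
      have hL3 : ∀ f ∈ L 3, f = c0 ∨ f = c1 ∨ f = c2 ∨ f = b ∨ f = y := by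
        intro f hf
        by_cases hfs : f = c0 ∨ f = c1 ∨ f = c2 ∨ f = b
        · tauto
        · push_neg at hfs
          have : f ∈ L 3 \ {c0,c1,c2,b} := Finset.mem_sdiff.mpr ⟨hf, by
            simp only [Finset.mem_insert, Finset.mem_singleton, not_or]
            exact hfs⟩
          rw [hyeq] at this
          simp only [Finset.mem_singleton] at this
          tauto
      have hbc0 : b ≠ c0 := by
        intro hbc
        have hsub : L 3 ⊆ {c0,c1,c2,y} := by
          intro f hf
          rcases hL3 f hf with h|h|h|h|h <;> simp [h, hbc]
        have hcs := Finset.card_le_card hsub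
        have := cle4 c0 c1 c2 y
        omega
      have hbc1 : b ≠ c1 := by
        intro hbc
        have hsub : L 3 ⊆ {c0,c1,c2,y} := by
          intro f hf
          rcases hL3 f hf with h|h|h|h|h <;> simp [h, hbc]
        have hcs := Finset.card_le_card hsub
        have := cle4 c0 c1 c2 y
        omega
      by_cases hgy : ∃ c5, c5 ∈ L 5 ∧ c5 ≠ c0 ∧ c5 ≠ c1 ∧ c5 ≠ c2 ∧ c5 ≠ y ∧
          ∃ c6, c6 ∈ L 6 ∧ c6 ≠ c2 ∧ c6 ≠ c5
      · exact step y hy3 hy0 hy1 hy2 hgy ⟨b, hbmem.1, hbmem.2, fun h => hyb h.symm⟩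
      · push_neg at hgy
        obtain ⟨e, he6, hec2⟩ := pick1 (L 6) h6 c2
        obtain ⟨x, hx5, hx0, hx1, hx2, hxy⟩ := pick4 (L 5) h5 c0 c1 c2 y
        have hex : e = x := hgy x hx5 hx0 hx1 hx2 hxy e he6 hec2
        have hx6 : x ∈ L 6 := hex ▸ he6
        have hxc2 : x ≠ c2 := hex ▸ hec2
        have hL6 : ∀ f ∈ L 6, f = c2 ∨ f = x := by
          intro f hf
          by_cases hfc : f = c2
          · exact Or.inl hfc
          · exact Or.inr (hgy x hx5 hx0 hx1 hx2 hxy f hf hfc)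
        have hc2L6 : c2 ∈ L 6 := by
          by_contra hcc
          have hsub : L 6 ⊆ {x} := by
            intro f hf
            rcases hL6 f hf with h|h
            · exact absurd (h ▸ hf) hcc
            · simp [h]
          have := Finset.card_le_card hsub
          simp only [Finset.card_singleton] at this
          omega
        have hy5 : y ∈ L 5 := by
          obtain ⟨s, hs5, hs0, hs1, hs2, hsx⟩ := pick4 (L 5) h5 c0 c1 c2 x
          rcases eq_or_ne s y with rfl | hsy
          · exact hs5
          · exact absurd (hgy s hs5 hs0 hs1 hs2 hsy x hx6 hxc2) (fun h => hsx h.symm)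
        by_cases hI : ∀ t ∈ L 2, t = c0 ∨ t = c1 ∨ t = c2 ∨ (t = b ∧ b = x)
        · have hn4 : ∀ s : ℕ, s ≠ c2 → s ≠ b → s ∉ L 4 := by
            intro s hs2 hsb hm
            rcases hL4 s hm with h|h
            exacts [hs2 h, hsb h]
          have hn6 : ∀ s : ℕ, s ≠ c2 → s ≠ x → s ∉ L 6 := by
            intro s hs2 hsx hm
            rcases hL6 s hm with h|h
            exacts [hs2 h, hsx h]
          have hor : c0 ∈ L 2 ∨ c1 ∈ L 2 := by
            by_contra hno
            push_neg at hno
            have hsub : L 2 ⊆ {c2, b} := by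
              intro f hf
              rcases hI f hf with h|h|h|⟨h,_⟩
              · exact absurd (h ▸ hf) hno.1
              · exact absurd (h ▸ hf) hno.2
              · simp [h]
              · simp [h]
            have := Finset.card_le_card hsub
            have := cle2 c2 b
            omega
          rcases hor with hc0L2 | hc1L2
          · obtain ⟨c0', h0', h0'0, h0'1⟩ := pick2 (L 0) h0 c0 c1
            exact easyT6 L h3 h4 h5 h6 c0' c1 c0 h0' hc1 hc0L2 h0'1 h0'0
              (fun h => hc01 h.symm)
              (hn4 c0 (fun h => hc20 h.symm) (fun h => hbc0 h.symm))
              (hn6 c0 (fun h => hc20 h.symm) (fun h => hx0 h.symm))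
          · obtain ⟨c1', h1', h1'1⟩ := pick1 (L 1) h1 c1
            obtain ⟨c0'', h0'', h0''a, h0''b⟩ := pick2 (L 0) h0 c1' c1
            exact easyT6 L h3 h4 h5 h6 c0'' c1' c1 h0'' h1' hc1L2 h0''a h0''b h1'1
              (hn4 c1 (fun h => hc21 h.symm) (fun h => hbc1 h.symm))
              (hn6 c1 (fun h => hc21 h.symm) (fun h => hx1 h.symm))
        · push_neg at hI
          obtain ⟨t, htL2, ht0, ht1, ht2, htbx⟩ := hI
          by_cases htb : t = b
          · have hbx : b ≠ x := htbx htb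
            exact finishT6 L c0 c1 t y c2 x c2 hc0 hc1 htL2 hy3 hc2L4 hx5 hc2L6
              hc01 ht0.symm hy0.symm hx0.symm ht1.symm hy1.symm hx1.symm
              (by rw [htb]; exact fun h => hyb h.symm)
              (by rw [htb]; exact hbx)
              (fun h => hxy h.symm)
              ht2 hy2 ht2 hxc2
          · by_cases htx : t = x
            · have hxb : x ≠ b := fun h => htb (htx.trans h)
              obtain ⟨z, hz3, hz0, hz1, hzx, hzy⟩ := pick4 (L 3) h3 c0 c1 x y
              by_cases hzc2 : z = c2
              · exact finishT6 L c0 c1 t z b y c2 hc0 hc1 htL2 hz3 hbmem.1 hy5 hc2L6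
                  hc01 ht0.symm hz0.symm hy0.symm ht1.symm hz1.symm hy1.symm
                  (by rw [htx]; exact fun h => hzx h.symm)
                  (by rw [htx]; exact hxy)
                  hzy
                  (by rw [htx]; exact hxb)
                  (by rw [hzc2]; exact fun h => hbmem.2 h.symm)
                  ht2 hy2
              · exact finishT6 L c0 c1 t z c2 y c2 hc0 hc1 htL2 hz3 hc2L4 hy5 hc2L6
                  hc01 ht0.symm hz0.symm hy0.symm ht1.symm hz1.symm hy1.symm
                  (by rw [htx]; exact fun h => hzx h.symm)
                  (by rw [htx]; exact hxy)
                  hzy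
                  ht2 hzc2 ht2 hy2
            · exact easyT6 L h3 h4 h5 h6 c0 c1 t hc0 hc1 htL2 hc01 ht0.symm ht1.symm
                (fun hm => by rcases hL4 t hm with h|h; exacts [ht2 h, htb h])
                (fun hm => by rcases hL6 t hm with h|h; exacts [ht2 h, htx h])
end

section
/- Let T be the tree consisting of the path u1u2u3u4u5, a pendant path u3u'3u''3, leaves v3, v'3 adjacent to u''3, and leaves v5, v'5 adjacent to u5. If L is a list assignment with |L(u1)| ≥ 2, |L(u2)| ≥ 3, |L(u3)| ≥ 3, |L(u4)| ≥ 5, |L(u5)| ≥ 4, |L(u'3)| ≥ 5, |L(u''3)| ≥ 4, |L(v3)| ≥ 3, |L(v'3)| ≥ 2, |L(v5)| ≥ 3, |L(v'5)| ≥ 2, then T admits a 2-distance L-coloring. -/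
/-- The tree of the corresponding configuration, with vertices 0 = u1, 1 = u2, 2 = u3, 3 = u4, 4 = u5, 5 = u'3, 6 = u''3, 7 = v3, 8 = v'3, 9 = v5, 10 = v'5. -/
def T11 : SimpleGraph (Fin 11) :=
  SimpleGraph.fromRel (fun u v => (u = 0 ∧ v = 1) ∨ (u = 1 ∧ v = 2) ∨ (u = 2 ∧ v = 3) ∨ (u = 3 ∧ v = 4) ∨ (u = 2 ∧ v = 5) ∨ (u = 5 ∧ v = 6) ∨ (u = 6 ∧ v = 7) ∨ (u = 6 ∧ v = 8) ∨ (u = 4 ∧ v = 9) ∨ (u = 4 ∧ v = 10))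

namespace TColorAux

instance : DecidableRel T11.Adj := fun u v =>
  decidable_of_iff _ (SimpleGraph.fromRel_adj _ u v).symm

/-- the required list sizes -/
def nv : Fin 11 → ℕ := ![2,3,3,5,4,5,4,3,2,3,2]

abbrev Good (S : Fin 11 → Finset ℕ) : Prop :=
  ∃ φ : Fin 11 → ℕ, (∀ v, φ v ∈ S v) ∧
    ∀ u v : Fin 11, u ≠ v →
      (T11.Adj u v ∨ ∃ w, T11.Adj u w ∧ T11.Adj w v) → φ u ≠ φ v

lemma cardp (x y : ℕ) : ({x, y} : Finset ℕ).card ≤ 2 := by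
  apply le_trans (Finset.card_insert_le _ _); simp

lemma cardt (x y z : ℕ) : ({x, y, z} : Finset ℕ).card ≤ 3 := by
  apply le_trans (Finset.card_insert_le _ _)
  have := cardp y z; omega

lemma pick (s t : Finset ℕ) (h : t.card < s.card) : ∃ a, a ∈ s ∧ a ∉ t := by
  have h1 : 0 < (s \ t).card := by
    have := Finset.le_card_sdiff t s
    omega
  obtain ⟨a, ha⟩ := Finset.card_pos.mp h1
  rw [Finset.mem_sdiff] at ha
  exact ⟨a, ha.1, ha.2⟩

lemma mem1 {t x : ℕ} (h : t ≠ x) : t ∉ ({x} : Finset ℕ) := by simp [h]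

lemma mem3 {t x y z : ℕ} (h1 : t ≠ x) (h2 : t ≠ y) (h3 : t ≠ z) :
    t ∉ ({x, y, z} : Finset ℕ) := by simp [h1, h2, h3]

set_option maxHeartbeats 1000000 in
lemma verif (c0 c1 c2 c3 c4 c5 c6 c7 c8 c9 c10 : ℕ)
    (h01 : c0 ≠ c1) (h02 : c0 ≠ c2) (h12 : c1 ≠ c2) (h13 : c1 ≠ c3) (h15 : c1 ≠ c5)
    (h23 : c2 ≠ c3) (h24 : c2 ≠ c4) (h25 : c2 ≠ c5) (h26 : c2 ≠ c6)
    (h34 : c3 ≠ c4) (h35 : c3 ≠ c5) (h39 : c3 ≠ c9) (h3t : c3 ≠ c10)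
    (h49 : c4 ≠ c9) (h4t : c4 ≠ c10) (h9t : c9 ≠ c10)
    (h56 : c5 ≠ c6) (h57 : c5 ≠ c7) (h58 : c5 ≠ c8) (h67 : c6 ≠ c7) (h68 : c6 ≠ c8) (h78 : c7 ≠ c8) :
    ∀ u v : Fin 11, u ≠ v →
      (T11.Adj u v ∨ ∃ w, T11.Adj u w ∧ T11.Adj w v) →
      ![c0,c1,c2,c3,c4,c5,c6,c7,c8,c9,c10] u ≠ ![c0,c1,c2,c3,c4,c5,c6,c7,c8,c9,c10] v := by
  intro u v huv h
  fin_cases u <;> fin_cases v <;>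
    first
      | exact absurd rfl huv
      | exact h01 | exact h02 | exact h12 | exact h13 | exact h15
      | exact h23 | exact h24 | exact h25 | exact h26
      | exact h34 | exact h35 | exact h39 | exact h3t
      | exact h49 | exact h4t | exact h9t
      | exact h56 | exact h57 | exact h58 | exact h67 | exact h68 | exact h78
      | exact h01.symm | exact h02.symm | exact h12.symm | exact h13.symm | exact h15.symm
      | exact h23.symm | exact h24.symm | exact h25.symm | exact h26.symm
      | exact h34.symm | exact h35.symm | exact h39.symm | exact h3t.symm
      | exact h49.symm | exact h4t.symm | exact h9t.symm
      | exact h56.symm | exact h57.symm | exact h58.symm | exact h67.symm | exact h68.symm | exact h78.symm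
      | (exfalso; revert h; decide)

/-- list coloring of K4 with list sizes (2,3,3,2), given a Hall-type condition -/
lemma K4 (A B C D : Finset ℕ) (hA : 2 ≤ A.card) (hB : 3 ≤ B.card) (hC : 3 ≤ C.card)
    (hD : 2 ≤ D.card) (h : ¬(A ∪ B ∪ D ⊆ C)) :
    ∃ a b c d, a ∈ A ∧ b ∈ B ∧ c ∈ C ∧ d ∈ D ∧
      a ≠ b ∧ a ≠ c ∧ a ≠ d ∧ b ≠ c ∧ b ≠ d ∧ c ≠ d := by
  rw [Finset.not_subset] at h
  obtain ⟨x, hxU, hxC⟩ := h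
  simp only [Finset.mem_union] at hxU
  by_cases hxD : x ∈ D
  · obtain ⟨a, haA, ha⟩ := pick A {x} (by have := Finset.card_singleton x; omega)
    have hax : a ≠ x := by simpa using ha
    obtain ⟨b, hbB, hb⟩ := pick B {a, x} (by have := cardp a x; omega)
    have hba : b ≠ a := fun e => hb (by
      simp [e])
    have hbx : b ≠ x := fun e => hb (by simp [e])
    obtain ⟨c, hcC, hc⟩ := pick C {a, b} (by have := cardp a b; omega)
    have hca : c ≠ a := fun e => hc (by simp [e])
    have hcb : c ≠ b := fun e => hc (by simp [e])
    have hcx : c ≠ x := fun e => hxC (e ▸ hcC)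
    exact ⟨a, b, c, x, haA, hbB, hcC, hxD, hba.symm, hca.symm, hax, hcb.symm, hbx, hcx⟩
  · by_cases hxB : x ∈ B
    · obtain ⟨a, haA, ha⟩ := pick A {x} (by have := Finset.card_singleton x; omega)
      have hax : a ≠ x := by simpa using ha
      obtain ⟨d, hdD, hd⟩ := pick D {a} (by have := Finset.card_singleton a; omega)
      have hda : d ≠ a := by simpa using hd
      have hxd : x ≠ d := fun e => hxD (e ▸ hdD)
      obtain ⟨c, hcC, hc⟩ := pick C {a, d} (by have := cardp a d; omega)
      have hca : c ≠ a := fun e => hc (by simp [e])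
      have hcd : c ≠ d := fun e => hc (by simp [e])
      have hxc : x ≠ c := fun e => hxC (e ▸ hcC)
      exact ⟨a, x, c, d, haA, hxB, hcC, hdD, hax, hca.symm, hda.symm, hxc, hxd, hcd⟩
    · have hxA : x ∈ A := by tauto
      obtain ⟨d, hdD, _⟩ := pick D ∅ (by simp only [Finset.card_empty]; omega)
      have hxd : x ≠ d := fun e => hxD (e ▸ hdD)
      obtain ⟨b, hbB, hb⟩ := pick B {x, d} (by have := cardp x d; omega)
      have hbx : b ≠ x := fun e => hb (by simp [e])
      have hbd : b ≠ d := fun e => hb (by simp [e])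
      obtain ⟨c, hcC, hc⟩ := pick C {b, d} (by have := cardp b d; omega)
      have hcb : c ≠ b := fun e => hc (by simp [e])
      have hcd : c ≠ d := fun e => hc (by simp [e])
      have hxc : x ≠ c := fun e => hxC (e ▸ hcC)
      exact ⟨x, b, c, d, hxA, hbB, hcC, hdD, hbx.symm, hxc, hxd, hcb.symm, hbd, hcd⟩

lemma keymem1 (X Y : Finset ℕ) (p : ℕ) (hc : Y.card < X.card) (h : X \ {p} ⊆ Y) :
    p ∈ X ∧ p ∉ Y := by
  constructor
  · by_contra hp
    have hsub : X ⊆ Y := by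
      intro y hy
      have hyp : y ≠ p := fun e => hp (e ▸ hy)
      exact h (Finset.mem_sdiff.mpr ⟨hy, mem1 hyp⟩)
    have := Finset.card_le_card hsub
    omega
  · intro hpY
    have hsub : X ⊆ Y := by
      intro y hy
      rcases eq_or_ne y p with rfl | hyp
      · exact hpY
      · exact h (Finset.mem_sdiff.mpr ⟨hy, mem1 hyp⟩)
    have := Finset.card_le_card hsub
    omega

lemma keymem2 (X Y : Finset ℕ) (p q : ℕ) (hc : Y.card + 1 < X.card) (h : X \ {p, q} ⊆ Y) :
    p ∈ X ∧ p ∉ Y := by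
  have hins : ∀ y ∈ X, y ≠ p → y ∈ insert q Y := by
    intro y hy hyp
    rcases eq_or_ne y q with rfl | hyq
    · exact Finset.mem_insert_self _ _
    · exact Finset.mem_insert_of_mem (h (Finset.mem_sdiff.mpr ⟨hy, by simp [hyp, hyq]⟩))
  constructor
  · by_contra hp
    have hsub : X ⊆ insert q Y := fun y hy => hins y hy (fun e => hp (e ▸ hy))
    have h1 := Finset.card_le_card hsub
    have h2 := Finset.card_insert_le q Y
    omega
  · intro hpY
    have hsub : X ⊆ insert q Y := by
      intro y hy
      rcases eq_or_ne y p with rfl | hyp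
      · exact Finset.mem_insert_of_mem hpY
      · exact hins y hy hyp
    have h1 := Finset.card_le_card hsub
    have h2 := Finset.card_insert_le q Y
    omega

lemma pin (X Y : Finset ℕ) (hc : Y.card < X.card) {x y : ℕ}
    (hx : X \ {x} ⊆ Y) (hy : X \ {y} ⊆ Y) : x = y := by
  by_contra hne
  obtain ⟨hxX, hxY⟩ := keymem1 X Y x hc hx
  exact hxY (hy (Finset.mem_sdiff.mpr ⟨hxX, mem1 hne⟩))

section
variable (S : Fin 11 → Finset ℕ)

/-- the key coloring step: a coloring exists if suitable colors for the central
path are given subject to two Hall-type conditions for the two pendant cliques. -/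
lemma success (hS : ∀ v, (S v).card = nv v) (c0 c1 c2 z : ℕ)
    (m0 : c0 ∈ S 0) (m1 : c1 ∈ S 1) (m2 : c2 ∈ S 2)
    (d01 : c0 ≠ c1) (d02 : c0 ≠ c2) (d12 : c1 ≠ c2)
    (hR : ¬(S 3 \ {c1, c2, z} ∪ S 4 \ {c2} ∪ S 10 ⊆ S 9))
    (hL : ∀ c3, c3 ∈ S 3 → c3 ≠ c1 → c3 ≠ c2 → c3 ≠ z →
        ¬(S 5 \ {c1, c2, c3} ∪ S 6 \ {c2} ∪ S 8 ⊆ S 7)) :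
    Good S := by
  have e3 : (S 3).card = 5 := hS 3
  have e4 : (S 4).card = 4 := hS 4
  have e5 : (S 5).card = 5 := hS 5
  have e6 : (S 6).card = 4 := hS 6
  have e7 : (S 7).card = 3 := hS 7
  have e8 : (S 8).card = 2 := hS 8
  have e9 : (S 9).card = 3 := hS 9
  have e10 : (S 10).card = 2 := hS 10
  have hA : 2 ≤ (S 3 \ {c1, c2, z}).card := by
    have h1 := Finset.le_card_sdiff ({c1, c2, z} : Finset ℕ) (S 3)
    have h2 := cardt c1 c2 z
    omega
  have hB : 3 ≤ (S 4 \ {c2}).card := by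
    have h1 := Finset.le_card_sdiff ({c2} : Finset ℕ) (S 4)
    have h2 := Finset.card_singleton c2
    omega
  obtain ⟨c3, c4, c9, c10, mc3, mc4, mc9, mc10, d34, d39, d3t, d49, d4t, d9t⟩ :=
    K4 _ _ _ _ hA hB (by omega) (by omega) hR
  rw [Finset.mem_sdiff] at mc3 mc4
  obtain ⟨m3, hc3'⟩ := mc3
  obtain ⟨m4, hc4'⟩ := mc4
  have n31 : c3 ≠ c1 := fun e => hc3' (by simp [e])
  have n32 : c3 ≠ c2 := fun e => hc3' (by simp [e])
  have n3z : c3 ≠ z := fun e => hc3' (by simp [e])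
  have n42 : c4 ≠ c2 := by simpa using hc4'
  have hA' : 2 ≤ (S 5 \ {c1, c2, c3}).card := by
    have h1 := Finset.le_card_sdiff ({c1, c2, c3} : Finset ℕ) (S 5)
    have h2 := cardt c1 c2 c3
    omega
  have hB' : 3 ≤ (S 6 \ {c2}).card := by
    have h1 := Finset.le_card_sdiff ({c2} : Finset ℕ) (S 6)
    have h2 := Finset.card_singleton c2
    omega
  obtain ⟨c5, c6, c7, c8, mc5, mc6, mc7, mc8, d56, d57, d58, d67, d68, d78⟩ :=
    K4 _ _ _ _ hA' hB' (by omega) (by omega) (hL c3 m3 n31 n32 n3z)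
  rw [Finset.mem_sdiff] at mc5 mc6
  obtain ⟨m5, hc5'⟩ := mc5
  obtain ⟨m6, hc6'⟩ := mc6
  have n51 : c5 ≠ c1 := fun e => hc5' (by simp [e])
  have n52 : c5 ≠ c2 := fun e => hc5' (by simp [e])
  have n53 : c5 ≠ c3 := fun e => hc5' (by simp [e])
  have n62 : c6 ≠ c2 := by simpa using hc6'
  refine ⟨![c0,c1,c2,c3,c4,c5,c6,c7,c8,c9,c10], ?_,
    verif c0 c1 c2 c3 c4 c5 c6 c7 c8 c9 c10 d01 d02 d12 n31.symm n51.symm n32.symm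
      n42.symm n52.symm n62.symm d34 n53.symm d39 d3t d49 d4t d9t d56 d57 d58 d67 d68 d78⟩
  intro v
  fin_cases v
  · exact m0
  · exact m1
  · exact m2
  · exact m3
  · exact m4
  · exact m5
  · exact m6
  · exact mc7
  · exact mc8
  · exact mc9
  · exact mc10

/-- a candidate color for vertex 2 works if neither pinning condition holds -/
lemma tryx (hS : ∀ v, (S v).card = nv v) (c1 x : ℕ)
    (m1 : c1 ∈ S 1) (h10 : c1 ∉ S 0) (mx : x ∈ S 2) (dx : x ≠ c1)
    (hP : ¬(S 6 \ {x} ⊆ S 7)) (hQ : ¬(S 4 \ {x} ⊆ S 9)) : Good S := by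
  have e0 : (S 0).card = 2 := hS 0
  obtain ⟨c0, m0, hc0⟩ := pick (S 0) {x} (by have := Finset.card_singleton x; omega)
  have d02 : c0 ≠ x := by simpa using hc0
  have d01 : c0 ≠ c1 := fun e => h10 (e ▸ m0)
  rw [Finset.not_subset] at hP hQ
  obtain ⟨t, ht4, ht9⟩ := hQ
  obtain ⟨s, hs6, hs7⟩ := hP
  refine success S hS c0 c1 x c1 m0 m1 mx d01 d02 dx.symm ?_ ?_
  · exact Finset.not_subset.mpr ⟨t, Finset.mem_union_left _ (Finset.mem_union_right _ ht4), ht9⟩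
  · intro c3 _ _ _ _
    exact Finset.not_subset.mpr ⟨s, Finset.mem_union_left _ (Finset.mem_union_right _ hs6), hs7⟩

/-- the difficult case: `c1 ∈ S 2` and both remaining candidate colors for vertex 2
are pinned (one by the right clique, one by the left clique). -/
lemma caseII (hS : ∀ v, (S v).card = nv v) (c1 a b : ℕ)
    (m1 : c1 ∈ S 1) (h10 : c1 ∉ S 0) (m12 : c1 ∈ S 2)
    (ma : a ∈ S 2) (mb : b ∈ S 2) (dac : a ≠ c1) (dbc : b ≠ c1) (dab : a ≠ b)
    (G4a : S 4 \ {a} ⊆ S 9) (G6b : S 6 \ {b} ⊆ S 7) : Good S := by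
  have e0 : (S 0).card = 2 := hS 0
  have e1 : (S 1).card = 3 := hS 1
  have e3 : (S 3).card = 5 := hS 3
  have e4 : (S 4).card = 4 := hS 4
  have e5 : (S 5).card = 5 := hS 5
  have e6 : (S 6).card = 4 := hS 6
  have e7 : (S 7).card = 3 := hS 7
  have e9 : (S 9).card = 3 := hS 9
  obtain ⟨hb6, hb7⟩ := keymem1 (S 6) (S 7) b (by omega) G6b
  obtain ⟨ha4, ha9⟩ := keymem1 (S 4) (S 9) a (by omega) G4a
  -- the left clique is safe when vertex 2 gets color a, since b ∈ S 6 \ S 7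
  have hLa : ∀ (C1 c3 : ℕ), ¬(S 5 \ {C1, a, c3} ∪ S 6 \ {a} ∪ S 8 ⊆ S 7) := by
    intro C1 c3
    exact Finset.not_subset.mpr ⟨b, Finset.mem_union_left _ (Finset.mem_union_right _
      (Finset.mem_sdiff.mpr ⟨hb6, mem1 dab.symm⟩)), hb7⟩
  -- a's right-clique failure must be complete, otherwise we can color
  by_cases h109 : S 10 ⊆ S 9
  case neg =>
    obtain ⟨t, ht10, ht9⟩ := Finset.not_subset.mp h109
    obtain ⟨c0, m0, hc0⟩ := pick (S 0) {a} (by have := Finset.card_singleton a; omega)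
    refine success S hS c0 c1 a c1 m0 m1 ma (fun e => h10 (e ▸ m0)) (by simpa using hc0)
      dac.symm ?_ (fun c3 _ _ _ _ => hLa c1 c3)
    exact Finset.not_subset.mpr ⟨t, Finset.mem_union_right _ ht10, ht9⟩
  by_cases h39 : S 3 \ {c1, a} ⊆ S 9
  case neg =>
    obtain ⟨t, ht3, ht9⟩ := Finset.not_subset.mp h39
    rw [Finset.mem_sdiff] at ht3
    obtain ⟨ht3', htne⟩ := ht3
    have htc1 : t ≠ c1 := fun e => htne (by simp [e])
    have hta : t ≠ a := fun e => htne (by simp [e])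
    obtain ⟨c0, m0, hc0⟩ := pick (S 0) {a} (by have := Finset.card_singleton a; omega)
    refine success S hS c0 c1 a c1 m0 m1 ma (fun e => h10 (e ▸ m0)) (by simpa using hc0)
      dac.symm ?_ (fun c3 _ _ _ _ => hLa c1 c3)
    exact Finset.not_subset.mpr ⟨t, Finset.mem_union_left _ (Finset.mem_union_left _
      (Finset.mem_sdiff.mpr ⟨ht3', mem3 htc1 hta htc1⟩)), ht9⟩
  -- so S 3 = S 9 ∪ {c1, a}; in particular c1 ∈ S 3 and c1 ∉ S 9
  obtain ⟨hc13, hc19⟩ := keymem2 (S 3) (S 9) c1 a (by omega) h39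
  -- b's left-clique failure must be complete as well
  by_cases h87 : S 8 ⊆ S 7
  case neg =>
    obtain ⟨t, ht8, ht7⟩ := Finset.not_subset.mp h87
    obtain ⟨c0, m0, hc0⟩ := pick (S 0) {b} (by have := Finset.card_singleton b; omega)
    refine success S hS c0 c1 b c1 m0 m1 mb (fun e => h10 (e ▸ m0)) (by simpa using hc0)
      dbc.symm ?_ ?_
    · exact Finset.not_subset.mpr ⟨a, Finset.mem_union_left _ (Finset.mem_union_right _
        (Finset.mem_sdiff.mpr ⟨ha4, mem1 dab⟩)), ha9⟩
    · intro c3 _ _ _ _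
      exact Finset.not_subset.mpr ⟨t, Finset.mem_union_right _ ht8, ht7⟩
  by_cases h57 : S 5 ⊆ S 7 ∪ {c1, b}
  case neg =>
    obtain ⟨w, hw5, hw⟩ := Finset.not_subset.mp h57
    simp only [Finset.mem_union, Finset.mem_insert, Finset.mem_singleton, not_or] at hw
    obtain ⟨hw7, hwc1, hwb⟩ := hw
    obtain ⟨c0, m0, hc0⟩ := pick (S 0) {b} (by have := Finset.card_singleton b; omega)
    refine success S hS c0 c1 b w m0 m1 mb (fun e => h10 (e ▸ m0)) (by simpa using hc0)
      dbc.symm ?_ ?_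
    · exact Finset.not_subset.mpr ⟨a, Finset.mem_union_left _ (Finset.mem_union_right _
        (Finset.mem_sdiff.mpr ⟨ha4, mem1 dab⟩)), ha9⟩
    · intro c3 _ h1 h2 h3
      exact Finset.not_subset.mpr ⟨w, Finset.mem_union_left _ (Finset.mem_union_left _
        (Finset.mem_sdiff.mpr ⟨hw5, mem3 hwc1 hwb (Ne.symm h3)⟩)), hw7⟩
  -- so S 5 = S 7 ∪ {c1, b}; in particular c1 ∈ S 5 and c1 ∉ S 7
  have h57' : S 5 \ {c1, b} ⊆ S 7 := by
    intro y hy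
    rw [Finset.mem_sdiff] at hy
    rcases Finset.mem_union.mp (h57 hy.1) with h | h
    · exact h
    · exact absurd h hy.2
  obtain ⟨hc15, hc17⟩ := keymem2 (S 5) (S 7) c1 b (by omega) h57'
  -- second escape: recolor vertex 1 and give b to vertex 2
  obtain ⟨c1'', m1'', h1''⟩ := pick (S 1) {c1, b} (by have := cardp c1 b; omega)
  have h1''c : c1'' ≠ c1 := fun e => h1'' (by simp [e])
  have h1''b : c1'' ≠ b := fun e => h1'' (by simp [e])
  by_cases hT2 : S 0 ⊆ {c1'', b}
  case neg =>
    obtain ⟨c0, m0, hc0⟩ := Finset.not_subset.mp hT2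
    have d01 : c0 ≠ c1'' := fun e => hc0 (by simp [e])
    have d02 : c0 ≠ b := fun e => hc0 (by simp [e])
    refine success S hS c0 c1'' b c1 m0 m1'' mb d01 d02 h1''b ?_ ?_
    · exact Finset.not_subset.mpr ⟨a, Finset.mem_union_left _ (Finset.mem_union_right _
        (Finset.mem_sdiff.mpr ⟨ha4, mem1 dab⟩)), ha9⟩
    · intro c3 _ h1 h2 h3
      exact Finset.not_subset.mpr ⟨c1, Finset.mem_union_left _ (Finset.mem_union_left _
        (Finset.mem_sdiff.mpr ⟨hc15, mem3 (Ne.symm h1''c) (Ne.symm dbc) (Ne.symm h3)⟩)), hc17⟩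
  have heq2 : S 0 = {c1'', b} := Finset.eq_of_subset_of_card_le hT2 (by have := cardp c1'' b; omega)
  have hb0 : b ∈ S 0 := by rw [heq2]; simp
  -- third escape: recolor vertex 1 and give a to vertex 2
  obtain ⟨c1', m1', h1'⟩ := pick (S 1) {c1, a} (by have := cardp c1 a; omega)
  have h1'c : c1' ≠ c1 := fun e => h1' (by simp [e])
  have h1'a : c1' ≠ a := fun e => h1' (by simp [e])
  by_cases hT1 : S 0 ⊆ {c1', a}
  case neg =>
    obtain ⟨c0, m0, hc0⟩ := Finset.not_subset.mp hT1
    have d01 : c0 ≠ c1' := fun e => hc0 (by simp [e])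
    have d02 : c0 ≠ a := fun e => hc0 (by simp [e])
    refine success S hS c0 c1' a c1' m0 m1' ma d01 d02 h1'a ?_
      (fun c3 _ _ _ _ => hLa c1' c3)
    exact Finset.not_subset.mpr ⟨c1, Finset.mem_union_left _ (Finset.mem_union_left _
      (Finset.mem_sdiff.mpr ⟨hc13, mem3 (Ne.symm h1'c) (Ne.symm dac) (Ne.symm h1'c)⟩)), hc19⟩
  have heq1 : S 0 = {c1', a} := Finset.eq_of_subset_of_card_le hT1 (by have := cardp c1' a; omega)
  have ha0 : a ∈ S 0 := by rw [heq1]; simp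
  -- now S 0 = {a, b}, and from S 0 = {c1'', b} we get c1'' = a, so a ∈ S 1
  have hc1''a : c1'' = a := by
    have := ha0
    rw [heq2] at this
    simp only [Finset.mem_insert, Finset.mem_singleton] at this
    rcases this with h | h
    · exact h.symm
    · exact absurd h dab
  have ma1 : a ∈ S 1 := hc1''a ▸ m1''
  -- final escape: color 0 with b, 1 with a, 2 with c1
  refine success S hS b a c1 a hb0 ma1 m12 dab.symm dbc dac ?_ ?_
  · exact Finset.not_subset.mpr ⟨a, Finset.mem_union_left _ (Finset.mem_union_right _
      (Finset.mem_sdiff.mpr ⟨ha4, mem1 dac⟩)), ha9⟩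
  · intro c3 _ _ _ _
    exact Finset.not_subset.mpr ⟨b, Finset.mem_union_left _ (Finset.mem_union_right _
      (Finset.mem_sdiff.mpr ⟨hb6, mem1 dbc⟩)), hb7⟩

lemma main (hS : ∀ v, (S v).card = nv v) : Good S := by
  have e0 : (S 0).card = 2 := hS 0
  have e1 : (S 1).card = 3 := hS 1
  have e2 : (S 2).card = 3 := hS 2
  have e4 : (S 4).card = 4 := hS 4
  have e6 : (S 6).card = 4 := hS 6
  have e7 : (S 7).card = 3 := hS 7
  have e9 : (S 9).card = 3 := hS 9
  obtain ⟨c1, m1, h10⟩ := pick (S 1) (S 0) (by omega)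
  by_cases hc12 : c1 ∈ S 2
  · obtain ⟨a, ma, ha'⟩ := pick (S 2) {c1} (by have := Finset.card_singleton c1; omega)
    have ha : a ≠ c1 := by simpa using ha'
    obtain ⟨b, mb, hb'⟩ := pick (S 2) {c1, a} (by have := cardp c1 a; omega)
    have hb1 : b ≠ c1 := fun e => hb' (by simp [e])
    have hba : b ≠ a := fun e => hb' (by simp [e])
    by_cases G6a : S 6 \ {a} ⊆ S 7
    · by_cases G6b : S 6 \ {b} ⊆ S 7
      · exact absurd (pin (S 6) (S 7) (by omega) G6a G6b).symm hba
      · by_cases G4b : S 4 \ {b} ⊆ S 9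
        · exact caseII S hS c1 b a m1 h10 hc12 mb ma hb1 ha hba G4b G6a
        · exact tryx S hS c1 b m1 h10 mb hb1 G6b G4b
    · by_cases G4a : S 4 \ {a} ⊆ S 9
      · by_cases G6b : S 6 \ {b} ⊆ S 7
        · exact caseII S hS c1 a b m1 h10 hc12 ma mb ha hb1 (fun e => hba e.symm) G4a G6b
        · by_cases G4b : S 4 \ {b} ⊆ S 9
          · exact absurd (pin (S 4) (S 9) (by omega) G4a G4b).symm hba
          · exact tryx S hS c1 b m1 h10 mb hb1 G6b G4b
      · exact tryx S hS c1 a m1 h10 ma ha G6a G4a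
  · have trich : ∀ x, x ∈ S 2 → Good S ∨ (S 6 \ {x} ⊆ S 7 ∨ S 4 \ {x} ⊆ S 9) := by
      intro x mx
      by_cases G6 : S 6 \ {x} ⊆ S 7
      · exact Or.inr (Or.inl G6)
      · by_cases G4 : S 4 \ {x} ⊆ S 9
        · exact Or.inr (Or.inr G4)
        · exact Or.inl (tryx S hS c1 x m1 h10 mx (fun e => hc12 (e ▸ mx)) G6 G4)
    obtain ⟨u, mu, _⟩ := pick (S 2) ∅ (by simp only [Finset.card_empty]; omega)
    obtain ⟨v, mv, hv'⟩ := pick (S 2) {u} (by have := Finset.card_singleton u; omega)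
    have hvu : v ≠ u := by simpa using hv'
    obtain ⟨w, mw, hw'⟩ := pick (S 2) {u, v} (by have := cardp u v; omega)
    have hwu : w ≠ u := fun e => hw' (by simp [e])
    have hwv : w ≠ v := fun e => hw' (by simp [e])
    rcases trich u mu with g | hu6 | hu4
    · exact g
    · rcases trich v mv with g | hv6 | hv4
      · exact g
      · exact absurd (pin (S 6) (S 7) (by omega) hu6 hv6) (fun e => hvu e.symm)
      · rcases trich w mw with g | hw6 | hw4
        · exact g
        · exact absurd (pin (S 6) (S 7) (by omega) hu6 hw6) (fun e => hwu e.symm)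
        · exact absurd (pin (S 4) (S 9) (by omega) hv4 hw4) (fun e => hwv e.symm)
    · rcases trich v mv with g | hv6 | hv4
      · exact g
      · rcases trich w mw with g | hw6 | hw4
        · exact g
        · exact absurd (pin (S 6) (S 7) (by omega) hv6 hw6) (fun e => hwv e.symm)
        · exact absurd (pin (S 4) (S 9) (by omega) hu4 hw4) (fun e => hwu e.symm)
      · exact absurd (pin (S 4) (S 9) (by omega) hu4 hv4) (fun e => hvu e.symm)

end

end TColorAux


/-- The configuration admits a 2-distance coloring from the given lists. -/
theorem colorable_vii (L : Fin 11 → Finset ℕ)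
    (h0 : 2 ≤ (L 0).card)
    (h1 : 3 ≤ (L 1).card)
    (h2 : 3 ≤ (L 2).card)
    (h3 : 5 ≤ (L 3).card)
    (h4 : 4 ≤ (L 4).card)
    (h5 : 5 ≤ (L 5).card)
    (h6 : 4 ≤ (L 6).card)
    (h7 : 3 ≤ (L 7).card)
    (h8 : 2 ≤ (L 8).card)
    (h9 : 3 ≤ (L 9).card)
    (h10 : 2 ≤ (L 10).card) :
    ∃ φ : Fin 11 → ℕ, (∀ v, φ v ∈ L v) ∧
      ∀ u v : Fin 11, u ≠ v →
        (T11.Adj u v ∨ ∃ w, T11.Adj u w ∧ T11.Adj w v) → φ u ≠ φ v := by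
  have hcard : ∀ v : Fin 11, TColorAux.nv v ≤ (L v).card := by
    intro v
    fin_cases v
    · exact h0
    · exact h1
    · exact h2
    · exact h3
    · exact h4
    · exact h5
    · exact h6
    · exact h7
    · exact h8
    · exact h9
    · exact h10
  choose M hM1 hM2 using fun v => Finset.exists_subset_card_eq (hcard v)
  obtain ⟨φ, hmem, hdist⟩ := TColorAux.main M hM2
  exact ⟨φ, fun v => hM1 v (hmem v), hdist⟩
end

section
/- Let T be the tree consisting of the path u0u1u2u3u4u5, a pendant path u3u'3u''3, and leaves v3, v'3 adjacent to u''3. If L is a list assignment with |L(u0)| ≥ 2, |L(u1)| ≥ 2, |L(u2)| ≥ 4, |L(u3)| ≥ 3, |L(u4)| ≥ 4, |L(u5)| ≥ 2, |L(u'3)| ≥ 5, |L(u''3)| ≥ 4, |L(v3)| ≥ 3, |L(v'3)| ≥ 2, then T admits a 2-distance L-coloring. -/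
/-- The tree of the corresponding configuration, with vertices 0 = u0, 1 = u1, 2 = u2, 3 = u3, 4 = u4, 5 = u5, 6 = u'3, 7 = u''3, 8 = v3, 9 = v'3. -/
def T13 : SimpleGraph (Fin 10) :=
  SimpleGraph.fromRel (fun u v => (u = 0 ∧ v = 1) ∨ (u = 1 ∧ v = 2) ∨ (u = 2 ∧ v = 3) ∨ (u = 3 ∧ v = 4) ∨ (u = 4 ∧ v = 5) ∨ (u = 3 ∧ v = 6) ∨ (u = 6 ∧ v = 7) ∨ (u = 7 ∧ v = 8) ∨ (u = 7 ∧ v = 9))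

private lemma sdiff_nonempty_of_card (s t : Finset ℕ) (h : t.card < s.card) :
    (s \ t).Nonempty := by
  rw [← Finset.card_pos]
  have h1 : (s \ t).card + t.card = (s ∪ t).card := Finset.card_sdiff_add_card s t
  have h2 : s.card ≤ (s ∪ t).card := Finset.card_le_card Finset.subset_union_left
  omega

private lemma card3 (x y z : ℕ) : ({x, y, z} : Finset ℕ).card ≤ 3 := by
  have h1 := Finset.card_insert_le x ({y, z} : Finset ℕ)
  have h2 := Finset.card_insert_le y ({z} : Finset ℕ)
  simp only [Finset.card_singleton] at h2
  omega

private lemma card2 (x y : ℕ) : ({x, y} : Finset ℕ).card ≤ 2 := by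
  have h1 := Finset.card_insert_le x ({y} : Finset ℕ)
  simp only [Finset.card_singleton] at h1
  omega

private lemma sdiff_card_ge (s t : Finset ℕ) : s.card - t.card ≤ (s \ t).card := by
  have h1 : (s \ t).card + t.card = (s ∪ t).card := Finset.card_sdiff_add_card s t
  have h2 : s.card ≤ (s ∪ t).card := Finset.card_le_card Finset.subset_union_left
  omega

/-- SDR for the cluster: sets of sizes ≥ (2,3,3,2) whose union has size ≥ 4 admit
four pairwise distinct representatives. -/
private lemma cluster (A B C D : Finset ℕ) (hA : 2 ≤ A.card) (hB : 3 ≤ B.card)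
    (hC : 3 ≤ C.card) (hD : 2 ≤ D.card) (hU : 4 ≤ (A ∪ B ∪ C ∪ D).card) :
    ∃ a ∈ A, ∃ b ∈ B, ∃ c ∈ C, ∃ d ∈ D,
      a ≠ b ∧ a ≠ c ∧ a ≠ d ∧ b ≠ c ∧ b ≠ d ∧ c ≠ d := by
  obtain ⟨d, hd⟩ : D.Nonempty := Finset.card_pos.mp (by omega)
  obtain ⟨a, ha⟩ : (A \ {d}).Nonempty := by
    apply sdiff_nonempty_of_card
    simp only [Finset.card_singleton]; omega
  rw [Finset.mem_sdiff, Finset.mem_singleton] at ha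
  obtain ⟨haA, had⟩ := ha
  obtain ⟨c, hc⟩ : (C \ {a, d}).Nonempty := by
    apply sdiff_nonempty_of_card
    have := card2 a d; omega
  rw [Finset.mem_sdiff, Finset.mem_insert, Finset.mem_singleton] at hc
  push_neg at hc
  obtain ⟨hcC, hca, hcd⟩ := hc
  by_cases hB' : (B \ {a, d, c}).Nonempty
  · obtain ⟨b, hb⟩ := hB'
    rw [Finset.mem_sdiff, Finset.mem_insert, Finset.mem_insert, Finset.mem_singleton] at hb
    push_neg at hb
    obtain ⟨hbB, hba, hbd, hbc⟩ := hb
    refine ⟨a, haA, b, hbB, c, hcC, d, hd, ?_, ?_, ?_, ?_, ?_, ?_⟩ <;> omega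
  · rw [Finset.not_nonempty_iff_eq_empty, Finset.sdiff_eq_empty_iff_subset] at hB'
    have hBeq : B = {a, d, c} := Finset.eq_of_subset_of_card_le hB' (le_trans (card3 a d c) hB)
    have hcB : c ∈ B := by rw [hBeq]; simp
    by_cases hC' : (C \ {a, d, c}).Nonempty
    · obtain ⟨c', hc'⟩ := hC'
      rw [Finset.mem_sdiff, Finset.mem_insert, Finset.mem_insert, Finset.mem_singleton] at hc'
      push_neg at hc'
      obtain ⟨hc'C, hc'a, hc'd, hc'c⟩ := hc'
      refine ⟨a, haA, c, hcB, c', hc'C, d, hd, ?_, ?_, ?_, ?_, ?_, ?_⟩ <;> omega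
    · rw [Finset.not_nonempty_iff_eq_empty, Finset.sdiff_eq_empty_iff_subset] at hC'
      have hCeq : C = {a, d, c} := Finset.eq_of_subset_of_card_le hC' (le_trans (card3 a d c) hC)
      have haC : a ∈ C := by rw [hCeq]; simp
      have hdC : d ∈ C := by rw [hCeq]; simp
      obtain ⟨x, hx⟩ : ((A ∪ B ∪ C ∪ D) \ {a, d, c}).Nonempty := by
        apply sdiff_nonempty_of_card
        have := card3 a d c; omega
      rw [Finset.mem_sdiff, Finset.mem_insert, Finset.mem_insert, Finset.mem_singleton] at hx
      push_neg at hx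
      obtain ⟨hxU, hxa, hxd, hxc⟩ := hx
      rw [Finset.mem_union, Finset.mem_union, Finset.mem_union] at hxU
      rcases hxU with ((hxA | hxB) | hxC) | hxD
      · refine ⟨x, hxA, c, hcB, a, haC, d, hd, ?_, ?_, ?_, ?_, ?_, ?_⟩ <;> omega
      · exfalso; rw [hBeq] at hxB
        simp only [Finset.mem_insert, Finset.mem_singleton] at hxB
        tauto
      · exfalso; rw [hCeq] at hxC
        simp only [Finset.mem_insert, Finset.mem_singleton] at hxC
        tauto
      · refine ⟨a, haA, c, hcB, d, hdC, x, hxD, ?_, ?_, ?_, ?_, ?_, ?_⟩ <;> omega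

set_option maxHeartbeats 1000000 in
set_option synthInstance.maxHeartbeats 400000 in
set_option synthInstance.maxSize 2000 in
private lemma key13 : ∀ u v : Fin 10, u ≠ v →
    ((u ≠ v ∧ (((u = 0 ∧ v = 1) ∨ (u = 1 ∧ v = 2) ∨ (u = 2 ∧ v = 3) ∨ (u = 3 ∧ v = 4) ∨ (u = 4 ∧ v = 5) ∨ (u = 3 ∧ v = 6) ∨ (u = 6 ∧ v = 7) ∨ (u = 7 ∧ v = 8) ∨ (u = 7 ∧ v = 9)) ∨
      ((v = 0 ∧ u = 1) ∨ (v = 1 ∧ u = 2) ∨ (v = 2 ∧ u = 3) ∨ (v = 3 ∧ u = 4) ∨ (v = 4 ∧ u = 5) ∨ (v = 3 ∧ u = 6) ∨ (v = 6 ∧ u = 7) ∨ (v = 7 ∧ u = 8) ∨ (v = 7 ∧ u = 9)))) ∨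
      ∃ w : Fin 10, (u ≠ w ∧ (((u = 0 ∧ w = 1) ∨ (u = 1 ∧ w = 2) ∨ (u = 2 ∧ w = 3) ∨ (u = 3 ∧ w = 4) ∨ (u = 4 ∧ w = 5) ∨ (u = 3 ∧ w = 6) ∨ (u = 6 ∧ w = 7) ∨ (u = 7 ∧ w = 8) ∨ (u = 7 ∧ w = 9)) ∨
        ((w = 0 ∧ u = 1) ∨ (w = 1 ∧ u = 2) ∨ (w = 2 ∧ u = 3) ∨ (w = 3 ∧ u = 4) ∨ (w = 4 ∧ u = 5) ∨ (w = 3 ∧ u = 6) ∨ (w = 6 ∧ u = 7) ∨ (w = 7 ∧ u = 8) ∨ (w = 7 ∧ u = 9)))) ∧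
        (w ≠ v ∧ (((w = 0 ∧ v = 1) ∨ (w = 1 ∧ v = 2) ∨ (w = 2 ∧ v = 3) ∨ (w = 3 ∧ v = 4) ∨ (w = 4 ∧ v = 5) ∨ (w = 3 ∧ v = 6) ∨ (w = 6 ∧ v = 7) ∨ (w = 7 ∧ v = 8) ∨ (w = 7 ∧ v = 9)) ∨
          ((v = 0 ∧ w = 1) ∨ (v = 1 ∧ w = 2) ∨ (v = 2 ∧ w = 3) ∨ (v = 3 ∧ w = 4) ∨ (v = 4 ∧ w = 5) ∨ (v = 3 ∧ w = 6) ∨ (v = 6 ∧ w = 7) ∨ (v = 7 ∧ w = 8) ∨ (v = 7 ∧ w = 9))))) →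
    ((u = 0 ∧ v = 1) ∨ (u = 1 ∧ v = 0) ∨ (u = 0 ∧ v = 2) ∨ (u = 2 ∧ v = 0) ∨ (u = 1 ∧ v = 2) ∨ (u = 2 ∧ v = 1) ∨ (u = 1 ∧ v = 3) ∨ (u = 3 ∧ v = 1) ∨ (u = 2 ∧ v = 3) ∨ (u = 3 ∧ v = 2) ∨ (u = 2 ∧ v = 4) ∨ (u = 4 ∧ v = 2) ∨ (u = 2 ∧ v = 6) ∨ (u = 6 ∧ v = 2) ∨ (u = 3 ∧ v = 4) ∨ (u = 4 ∧ v = 3) ∨ (u = 3 ∧ v = 5) ∨ (u = 5 ∧ v = 3) ∨ (u = 3 ∧ v = 6) ∨ (u = 6 ∧ v = 3) ∨ (u = 3 ∧ v = 7) ∨ (u = 7 ∧ v = 3) ∨ (u = 4 ∧ v = 5) ∨ (u = 5 ∧ v = 4) ∨ (u = 4 ∧ v = 6) ∨ (u = 6 ∧ v = 4) ∨ (u = 6 ∧ v = 7) ∨ (u = 7 ∧ v = 6) ∨ (u = 6 ∧ v = 8) ∨ (u = 8 ∧ v = 6) ∨ (u = 6 ∧ v = 9) ∨ (u = 9 ∧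 v = 6) ∨ (u = 7 ∧ v = 8) ∨ (u = 8 ∧ v = 7) ∨ (u = 7 ∧ v = 9) ∨ (u = 9 ∧ v = 7) ∨ (u = 8 ∧ v = 9) ∨ (u = 9 ∧ v = 8)) := by
  decide

/-- The configuration admits a 2-distance coloring from the given lists. -/
theorem colorable_ix (L : Fin 10 → Finset ℕ)
    (h0 : 2 ≤ (L 0).card)
    (h1 : 2 ≤ (L 1).card)
    (h2 : 4 ≤ (L 2).card)
    (h3 : 3 ≤ (L 3).card)
    (h4 : 4 ≤ (L 4).card)
    (h5 : 2 ≤ (L 5).card)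
    (h6 : 5 ≤ (L 6).card)
    (h7 : 4 ≤ (L 7).card)
    (h8 : 3 ≤ (L 8).card)
    (h9 : 2 ≤ (L 9).card) :
    ∃ φ : Fin 10 → ℕ, (∀ v, φ v ∈ L v) ∧
      ∀ u v : Fin 10, u ≠ v →
        (T13.Adj u v ∨ ∃ w, T13.Adj u w ∧ T13.Adj w v) → φ u ≠ φ v := by
  -- Step 1: choose c3 ∈ L 3 such that (L 7 \ {c3}) ∪ L 8 ∪ L 9 has at least 4 elements.
  have hL3ne : (L 3).Nonempty := Finset.card_pos.mp (by omega)
  have step1 : ∃ c3 ∈ L 3, 4 ≤ ((L 7 \ {c3}) ∪ L 8 ∪ L 9).card := by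
    by_cases h87 : L 8 ⊆ L 7
    · by_cases h97 : L 9 ⊆ L 7
      · by_cases h7c : 5 ≤ (L 7).card
        · obtain ⟨c3, hc3⟩ := hL3ne
          refine ⟨c3, hc3, ?_⟩
          have hs : (L 7 \ {c3}) ⊆ (L 7 \ {c3}) ∪ L 8 ∪ L 9 :=
            Finset.subset_union_left.trans Finset.subset_union_left
          have hcc := Finset.card_le_card hs
          have hsd := sdiff_card_ge (L 7) {c3}
          simp only [Finset.card_singleton] at hsd
          omega
        · have hgood : ∃ c3 ∈ L 3, c3 ∉ L 7 ∨ c3 ∈ L 8 ∨ c3 ∈ L 9 := by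
            by_contra hno
            push_neg at hno
            have hsub : L 3 ⊆ L 7 \ L 8 := by
              intro x hx
              obtain ⟨hx7, hx8, _⟩ := hno x hx
              exact Finset.mem_sdiff.mpr ⟨hx7, hx8⟩
            have hcle : (L 3).card ≤ (L 7 \ L 8).card := Finset.card_le_card hsub
            have hceq : (L 7 \ L 8).card = (L 7).card - (L 8).card := Finset.card_sdiff_of_subset h87
            omega
          obtain ⟨c3, hc3, hor⟩ := hgood
          refine ⟨c3, hc3, ?_⟩
          have hsub : L 7 ⊆ (L 7 \ {c3}) ∪ L 8 ∪ L 9 := by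
            intro y hy
            by_cases hyc : y = c3
            · subst hyc
              rcases hor with h | h | h
              · exact absurd hy h
              · exact Finset.mem_union_left _ (Finset.mem_union_right _ h)
              · exact Finset.mem_union_right _ h
            · exact Finset.mem_union_left _ (Finset.mem_union_left _
                (Finset.mem_sdiff.mpr ⟨hy, by simp [hyc]⟩))
          have := Finset.card_le_card hsub
          omega
      · obtain ⟨x, hx9, hx7⟩ := Finset.not_subset.mp h97
        obtain ⟨c3, hc3⟩ := hL3ne
        refine ⟨c3, hc3, ?_⟩
        have hxs : x ∉ L 7 \ {c3} := fun hmem => hx7 (Finset.mem_sdiff.mp hmem).1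
        have hsub : insert x (L 7 \ {c3}) ⊆ (L 7 \ {c3}) ∪ L 8 ∪ L 9 := by
          apply Finset.insert_subset (Finset.mem_union_right _ hx9)
          exact Finset.subset_union_left.trans Finset.subset_union_left
        have hc1 := Finset.card_le_card hsub
        rw [Finset.card_insert_of_notMem hxs] at hc1
        have hsd := sdiff_card_ge (L 7) {c3}
        simp only [Finset.card_singleton] at hsd
        omega
    · obtain ⟨x, hx8, hx7⟩ := Finset.not_subset.mp h87
      obtain ⟨c3, hc3⟩ := hL3ne
      refine ⟨c3, hc3, ?_⟩
      have hxs : x ∉ L 7 \ {c3} := fun hmem => hx7 (Finset.mem_sdiff.mp hmem).1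
      have hsub : insert x (L 7 \ {c3}) ⊆ (L 7 \ {c3}) ∪ L 8 ∪ L 9 := by
        apply Finset.insert_subset
          (Finset.mem_union_left _ (Finset.mem_union_right _ hx8))
        exact Finset.subset_union_left.trans Finset.subset_union_left
      have hc1 := Finset.card_le_card hsub
      rw [Finset.card_insert_of_notMem hxs] at hc1
      have hsd := sdiff_card_ge (L 7) {c3}
      simp only [Finset.card_singleton] at hsd
      omega
  obtain ⟨c3, hc3L, hV⟩ := step1
  -- Step 2: greedy choices for vertices 1, 0, 2, 5, 4.
  obtain ⟨c1, hc1⟩ : (L 1 \ {c3}).Nonempty := by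
    apply sdiff_nonempty_of_card; simp only [Finset.card_singleton]; omega
  rw [Finset.mem_sdiff, Finset.mem_singleton] at hc1
  obtain ⟨hc1L, n13'⟩ := hc1
  have n13 : c1 ≠ c3 := n13'
  obtain ⟨c0, hc0⟩ : (L 0 \ {c1}).Nonempty := by
    apply sdiff_nonempty_of_card; simp only [Finset.card_singleton]; omega
  rw [Finset.mem_sdiff, Finset.mem_singleton] at hc0
  obtain ⟨hc0L, n01⟩ := hc0
  obtain ⟨c2, hc2⟩ : (L 2 \ {c0, c1, c3}).Nonempty := by
    apply sdiff_nonempty_of_card; have := card3 c0 c1 c3; omega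
  rw [Finset.mem_sdiff, Finset.mem_insert, Finset.mem_insert, Finset.mem_singleton] at hc2
  push_neg at hc2
  obtain ⟨hc2L, n20, n21, n23⟩ := hc2
  obtain ⟨c5, hc5⟩ : (L 5 \ {c3}).Nonempty := by
    apply sdiff_nonempty_of_card; simp only [Finset.card_singleton]; omega
  rw [Finset.mem_sdiff, Finset.mem_singleton] at hc5
  obtain ⟨hc5L, n53⟩ := hc5
  obtain ⟨c4, hc4⟩ : (L 4 \ {c2, c3, c5}).Nonempty := by
    apply sdiff_nonempty_of_card; have := card3 c2 c3 c5; omega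
  rw [Finset.mem_sdiff, Finset.mem_insert, Finset.mem_insert, Finset.mem_singleton] at hc4
  push_neg at hc4
  obtain ⟨hc4L, n42, n43, n45⟩ := hc4
  -- Step 3: the cluster {6,7,8,9}.
  have hA : 2 ≤ ((L 6) \ {c2, c3, c4}).card := by
    have := sdiff_card_ge (L 6) {c2, c3, c4}
    have := card3 c2 c3 c4
    omega
  have hB : 3 ≤ ((L 7) \ {c3}).card := by
    have := sdiff_card_ge (L 7) {c3}
    simp only [Finset.card_singleton] at this
    omega
  have hU : 4 ≤ ((L 6 \ {c2, c3, c4}) ∪ (L 7 \ {c3}) ∪ L 8 ∪ L 9).card := by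
    have hsub : (L 7 \ {c3}) ∪ L 8 ∪ L 9 ⊆
        (L 6 \ {c2, c3, c4}) ∪ (L 7 \ {c3}) ∪ L 8 ∪ L 9 := by
      intro y hy
      rw [Finset.mem_union, Finset.mem_union] at hy
      rw [Finset.mem_union, Finset.mem_union, Finset.mem_union]
      tauto
    have := Finset.card_le_card hsub
    omega
  obtain ⟨c6, hc6, c7, hc7, c8, hc8L, c9, hc9L, n67, n68, n69, n78, n79, n89⟩ :=
    cluster (L 6 \ {c2, c3, c4}) (L 7 \ {c3}) (L 8) (L 9) hA hB h8 h9 hU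
  rw [Finset.mem_sdiff, Finset.mem_insert, Finset.mem_insert, Finset.mem_singleton] at hc6
  push_neg at hc6
  obtain ⟨hc6L, n62, n63, n64⟩ := hc6
  rw [Finset.mem_sdiff, Finset.mem_singleton] at hc7
  obtain ⟨hc7L, n73⟩ := hc7
  -- Assemble the coloring.
  refine ⟨![c0, c1, c2, c3, c4, c5, c6, c7, c8, c9], ?_, ?_⟩
  · intro v
    fin_cases v
    · exact hc0L
    · exact hc1L
    · exact hc2L
    · exact hc3L
    · exact hc4L
    · exact hc5L
    · exact hc6L
    · exact hc7L
    · exact hc8L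
    · exact hc9L
  · intro u v hne h
    simp only [T13, SimpleGraph.fromRel_adj] at h
    obtain ⟨rfl, rfl⟩ | ⟨rfl, rfl⟩ | ⟨rfl, rfl⟩ | ⟨rfl, rfl⟩ | ⟨rfl, rfl⟩ | ⟨rfl, rfl⟩ | ⟨rfl, rfl⟩ | ⟨rfl, rfl⟩ | ⟨rfl, rfl⟩ | ⟨rfl, rfl⟩ | ⟨rfl, rfl⟩ | ⟨rfl, rfl⟩ | ⟨rfl, rfl⟩ | ⟨rfl, rfl⟩ | ⟨rfl, rfl⟩ | ⟨rfl, rfl⟩ | ⟨rfl, rfl⟩ | ⟨rfl, rfl⟩ | ⟨rfl, rfl⟩ | ⟨rfl, rfl⟩ | ⟨rfl, rfl⟩ | ⟨rfl, rfl⟩ | ⟨rfl, rfl⟩ | ⟨rfl, rfl⟩ | ⟨rfl, rfl⟩ | ⟨rfl, rfl⟩ | ⟨rfl, rfl⟩ | ⟨rfl, rfl⟩ | ⟨rfl, rfl⟩ | ⟨rfl, rfl⟩ | ⟨rfl, rfl⟩ | ⟨rfl, rfl⟩ | ⟨rfl, rfl⟩ | ⟨rfl, rfl⟩ | ⟨rfl,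 rfl⟩ | ⟨rfl, rfl⟩ | ⟨rfl, rfl⟩ | ⟨rfl, rfl⟩ := key13 u v hne h
    · exact n01
    · exact Ne.symm n01
    · exact Ne.symm n20
    · exact n20
    · exact Ne.symm n21
    · exact n21
    · exact n13
    · exact Ne.symm n13
    · exact n23
    · exact Ne.symm n23
    · exact Ne.symm n42
    · exact n42
    · exact Ne.symm n62
    · exact n62
    · exact Ne.symm n43
    · exact n43
    · exact Ne.symm n53
    · exact n53
    · exact Ne.symm n63
    · exact n63
    · exact Ne.symm n73
    · exact n73
    · exact n45
    · exact Ne.symm n45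
    · exact Ne.symm n64
    · exact n64
    · exact n67
    · exact Ne.symm n67
    · exact n68
    · exact Ne.symm n68
    · exact n69
    · exact Ne.symm n69
    · exact n78
    · exact Ne.symm n78
    · exact n79
    · exact Ne.symm n79
    · exact n89
    · exact Ne.symm n89
end

section
/- There exists a planar graph G with maximum degree 4 and girth 5 whose 2-distance chromatic number is at least 7. -/
/-- A planar drawing of a graph: vertices map injectively to points of the plane, and
each edge is drawn as an arc (injective continuous curve) between the images of its
endpoints; arcs of the two orientations of an edge coincide; the interior of an arc
avoids every vertex point; and interiors of arcs of distinct edges are disjoint. -/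
def IsPlanar {V : Type*} (G : SimpleGraph V) : Prop :=
  ∃ (p : V → ℝ × ℝ) (f : V → V → ℝ → ℝ × ℝ),
    Function.Injective p ∧
    (∀ u v, G.Adj u v →
      ContinuousOn (f u v) (Set.Icc 0 1) ∧
      Set.InjOn (f u v) (Set.Icc 0 1) ∧
      f u v 0 = p u ∧ f u v 1 = p v ∧
      (∀ t ∈ Set.Icc (0:ℝ) 1, f u v t = f v u (1 - t)) ∧
      (∀ t ∈ Set.Ioo (0:ℝ) 1, ∀ w, f u v t ≠ p w)) ∧
    (∀ u v x y, G.Adj u v → G.Adj x y → s(u, v) ≠ s(x, y) →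
      ∀ t ∈ Set.Ioo (0:ℝ) 1, ∀ r ∈ Set.Ioo (0:ℝ) 1, f u v t ≠ f x y r)


namespace TwoDistAux

/-! ### The concrete graph: 11 vertices, 15 edges -/

def edges : List (Fin 11 × Fin 11) :=
  [(0,5),(0,2),(2,4),(4,1),(5,1),(5,3),(5,6),(7,2),(7,3),(8,6),(8,7),(9,2),(9,6),(10,1),(10,7)]

def adjB (u v : Fin 11) : Bool :=
  edges.any fun ed => (ed.1 == u && ed.2 == v) || (ed.1 == v && ed.2 == u)

def G11 : SimpleGraph (Fin 11) where
  Adj u v := adjB u v = true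
  symm := ⟨fun u v h => (by decide : ∀ a b : Fin 11, adjB a b = true → adjB b a = true) u v h⟩
  loopless := ⟨fun v h => (by decide : ∀ a : Fin 11, ¬ adjB a a = true) v h⟩

instance iA11 : DecidableRel G11.Adj := fun u v => inferInstanceAs (Decidable (adjB u v = true))

def e : Fin 15 → Fin 11 × Fin 11 :=
  ![(0,5),(0,2),(2,4),(4,1),(5,1),(5,3),(5,6),(7,2),(7,3),(8,6),(8,7),(9,2),(9,6),(10,1),(10,7)]

set_option maxRecDepth 10000 in
theorem adj_cases : ∀ u v : Fin 11, adjB u v = true →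
    ∃ i : Fin 15, e i = (u,v) ∨ e i = (v,u) := by decide

/-! ### Coordinates and separating-line certificates -/

def px : Fin 11 → ℤ := ![-29, 0, -59, 29, -95, 0, 0, 59, 29, -29, 95]
def py : Fin 11 → ℤ := ![-45, 100, -81, -45, 31, -9, -45, -81, -63, -63, 31]

abbrev L (a b : ℤ) (w : Fin 11) : ℤ := a * px w + b * py w

def certAf : Fin 15 → Fin 11 → ℤ × ℤ × ℤ :=
  ![![(-10,-6,560),(8,0,0),(-10,-6,818),(8,0,116),(-10,-6,662),(8,0,0),(8,0,0),(8,0,236),(8,0,116),(-10,-6,614),(8,0,380)],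
  ![(8,0,-232),(8,0,-116),(-10,-6,1076),(8,0,0),(-12,2,874),(8,0,-116),(8,0,-116),(8,0,120),(8,0,0),(8,0,-232),(8,0,264)],
  ![(8,0,-352),(8,0,-236),(8,0,-472),(8,0,-120),(-12,2,1202),(8,0,-236),(8,0,-236),(8,0,0),(8,0,-120),(8,0,-352),(8,0,144)],
  ![(2,-12,-40),(8,0,0),(-10,-6,920),(8,0,116),(-10,-6,764),(8,0,0),(8,0,0),(8,0,236),(8,0,116),(2,-12,68),(8,0,380)],
  ![(-10,-6,307),(-12,2,200),(-10,-6,565),(8,0,116),(-10,-6,409),(-10,-6,54),(-10,-6,162),(8,0,236),(8,0,116),(-10,-6,361),(8,0,380)],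
  ![(-10,-6,307),(-12,2,91),(-10,-6,565),(8,0,232),(-10,-6,409),(-10,-6,54),(-10,-6,162),(8,0,352),(8,0,232),(-116,-36,2978),(8,0,496)],
  ![(-10,-6,415),(-12,2,91),(-10,-6,673),(8,0,116),(-10,-6,517),(-12,2,-18),(-10,-6,270),(8,0,236),(8,0,116),(-10,-6,469),(8,0,380)],
  ![(-6,12,-492),(-6,12,291),(-10,-6,1076),(0,10,-630),(-12,2,874),(-6,12,-363),(-6,12,-579),(8,0,472),(0,10,-720),(-6,12,-600),(8,0,616)],
  ![(-10,-6,270),(-12,2,-119),(-10,-6,528),(-10,-6,-20),(-10,-6,372),(-10,-6,17),(-10,-6,125),(8,0,472),(-10,-6,34),(-116,-36,1944),(8,0,616)],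
  ![(-10,-6,415),(-12,2,55),(-10,-6,673),(8,0,232),(-10,-6,517),(-72,0,0),(-10,-6,270),(8,0,352),(8,0,232),(-10,-6,469),(8,0,496)],
  ![(-10,-6,324),(-12,2,-137),(-10,-6,582),(-12,2,-456),(-10,-6,426),(-12,2,-246),(-10,-6,179),(8,0,472),(-10,-6,88),(-10,-6,378),(8,0,616)],
  ![(8,0,-232),(8,0,-116),(-10,-6,1076),(8,0,0),(-12,2,874),(8,0,-116),(8,0,-116),(8,0,120),(8,0,0),(8,0,-232),(8,0,264)],
  ![(-12,2,240),(8,0,0),(-10,-6,872),(8,0,116),(-10,-6,716),(8,0,0),(8,0,0),(8,0,236),(8,0,116),(-10,-6,668),(8,0,380)],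
  ![(-248,-152,-584),(-10,-6,-600),(-10,-6,238),(-10,-6,-310),(-10,-6,82),(-10,-6,-273),(-10,-6,-165),(-10,-6,-352),(-10,-6,-256),(-10,-6,34),(8,0,760)],
  ![(-248,-152,5856),(-12,2,-335),(-10,-6,486),(-10,-6,-62),(-10,-6,330),(-10,-6,-25),(-10,-6,83),(-10,-6,-104),(-10,-6,-8),(-10,-6,282),(8,0,760)]]

def certBf : Fin 15 → Fin 15 → ℤ × ℤ × ℤ :=
  ![![(1,0,0),(-10,-6,560),(-16,2,578),(0,10,110),(10,2,-18),(8,0,0),(10,-8,72),(0,-8,504),(16,0,232),(16,0,0),(60,-36,2166),(0,-8,432),(0,-8,360),(16,0,0),(16,0,472)],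
  ![(10,6,-560),(1,0,0),(-12,2,546),(0,10,-70),(16,0,-232),(16,0,-232),(16,0,-232),(2,-12,854),(16,0,0),(16,0,-232),(60,-36,1944),(10,-10,220),(16,0,-464),(16,0,-232),(16,0,240)],
  ![(16,-2,-578),(12,-2,-546),(1,0,0),(-6,12,942),(16,0,-472),(16,0,-472),(16,0,-472),(8,0,-472),(16,0,-240),(16,0,-472),(60,-36,1692),(8,0,-472),(16,0,-704),(16,0,-472),(16,0,0)],
  ![(0,-10,-110),(0,-10,70),(6,-12,-942),(1,0,0),(10,-10,-1000),(16,0,0),(0,-8,-88),(0,-8,200),(16,0,232),(16,0,0),(60,-36,204),(0,-8,128),(0,-8,56),(8,0,0),(16,0,472)],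
  ![(-10,-2,18),(-16,0,232),(-16,0,472),(-10,10,1000),(1,0,0),(2,-12,108),(-10,-6,54),(0,-8,360),(16,0,232),(0,-8,216),(60,-36,2166),(0,-8,288),(0,-8,216),(10,2,200),(16,0,472)],
  ![(-8,0,0),(-16,0,232),(-16,0,472),(-16,0,0),(-2,12,-108),(1,0,0),(-10,-6,54),(0,-8,504),(8,0,232),(0,-8,360),(60,-36,3684),(0,-8,432),(0,-8,360),(0,10,110),(16,0,704)],
  ![(-10,8,-72),(-16,0,232),(-16,0,472),(0,8,88),(10,6,-54),(10,6,-54),(1,0,0),(0,-8,504),(16,0,232),(2,-12,540),(60,-36,2814),(0,-8,432),(-10,-6,270),(0,10,110),(16,0,472)],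
  ![(0,8,-504),(-2,12,-854),(-8,0,472),(0,8,-200),(0,8,-360),(0,8,-504),(0,8,-504),(1,0,0),(4,4,-88),(0,10,-720),(6,12,-618),(-6,12,-618),(0,10,-720),(0,10,-250),(8,0,472)],
  ![(-16,0,-232),(-16,0,0),(-16,0,240),(-16,0,-232),(-16,0,-232),(-8,0,-232),(-16,0,-232),(-4,-4,88),(1,0,0),(-16,-16,448),(-16,-16,352),(-16,-16,912),(-16,-16,536),(0,10,-70),(8,0,472)],
  ![(-16,0,0),(-16,0,232),(-16,0,472),(-16,0,0),(0,8,-216),(0,8,-360),(-2,12,-540),(0,-10,720),(16,16,-448),(1,0,0),(8,0,232),(0,-8,504),(-10,-6,270),(0,10,-70),(60,-36,4296)],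
  ![(-60,36,-2166),(-60,36,-1944),(-60,36,-1692),(-60,36,-204),(-60,36,-2166),(-60,36,-3684),(-60,36,-2814),(-6,-12,618),(16,16,-352),(-8,0,-232),(1,0,0),(-16,-16,1008),(-16,-16,632),(0,10,-160),(8,0,472)],
  ![(0,8,-432),(-10,10,-220),(-8,0,472),(0,8,-128),(0,8,-288),(0,8,-432),(0,8,-432),(6,-12,618),(16,16,-912),(0,8,-504),(16,16,-1008),(1,0,0),(8,0,-232),(16,0,-232),(16,0,240)],
  ![(0,8,-360),(-16,0,464),(-16,0,704),(0,8,-56),(0,8,-216),(0,8,-360),(10,6,-270),(0,-10,720),(16,16,-536),(10,6,-270),(16,16,-632),(-8,0,232),(1,0,0),(16,0,0),(16,0,472)],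
  ![(-16,0,0),(-16,0,232),(-16,0,472),(-8,0,0),(-10,-2,-200),(0,-10,-110),(0,-10,-110),(0,-10,250),(0,-10,70),(0,-10,70),(0,-10,160),(-16,0,232),(-16,0,0),(1,0,0),(2,-12,-182)],
  ![(-16,0,-472),(-16,0,-240),(-16,0,0),(-16,0,-472),(-16,0,-472),(-16,0,-704),(-16,0,-472),(-8,0,-472),(-8,0,-472),(-60,36,-4296),(-8,0,-472),(-16,0,-240),(-16,0,-472),(-2,12,182),(1,0,0)]]


abbrev propA' (i : Fin 15) (w : Fin 11) : Prop :=
  L (certAf i w).1 (certAf i w).2.1 (e i).1 ≤ (certAf i w).2.2 ∧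
  L (certAf i w).1 (certAf i w).2.1 (e i).2 ≤ (certAf i w).2.2 ∧
  (L (certAf i w).1 (certAf i w).2.1 (e i).1 < (certAf i w).2.2 ∨
   L (certAf i w).1 (certAf i w).2.1 (e i).2 < (certAf i w).2.2) ∧
  (certAf i w).2.2 ≤ L (certAf i w).1 (certAf i w).2.1 w

abbrev propB' (i j : Fin 15) : Prop :=
  L (certBf i j).1 (certBf i j).2.1 (e i).1 ≤ (certBf i j).2.2 ∧
  L (certBf i j).1 (certBf i j).2.1 (e i).2 ≤ (certBf i j).2.2 ∧
  (L (certBf i j).1 (certBf i j).2.1 (e i).1 < (certBf i j).2.2 ∨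
   L (certBf i j).1 (certBf i j).2.1 (e i).2 < (certBf i j).2.2) ∧
  (certBf i j).2.2 ≤ L (certBf i j).1 (certBf i j).2.1 (e j).1 ∧
  (certBf i j).2.2 ≤ L (certBf i j).1 (certBf i j).2.1 (e j).2 ∧
  ((certBf i j).2.2 < L (certBf i j).1 (certBf i j).2.1 (e j).1 ∨
   (certBf i j).2.2 < L (certBf i j).1 (certBf i j).2.1 (e j).2)

set_option maxRecDepth 100000 in
set_option maxHeartbeats 2000000 in
theorem factA' : ∀ i : Fin 15, ∀ w : Fin 11, propA' i w := by decide

set_option maxRecDepth 100000 in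
set_option maxHeartbeats 2000000 in
theorem factB' : ∀ i j : Fin 15, i ≠ j → propB' i j := by decide

theorem pinj : ∀ u v : Fin 11, px u = px v → py u = py v → u = v := by decide

/-! ### Generic real geometry lemmas for straight-line segments -/

theorem seg_injOn {x1 y1 x2 y2 : ℝ} (hne : ¬(x1 = x2 ∧ y1 = y2)) :
    Set.InjOn (fun t : ℝ => ((1-t)*x1 + t*x2, (1-t)*y1 + t*y2)) (Set.Icc 0 1) := by
  intro s _ t _ h
  have hx : (1-s)*x1 + s*x2 = (1-t)*x1 + t*x2 := congrArg Prod.fst h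
  have hy : (1-s)*y1 + s*y2 = (1-t)*y1 + t*y2 := congrArg Prod.snd h
  have e1 : (s - t) * (x2 - x1) = 0 := by linear_combination hx
  have e2 : (s - t) * (y2 - y1) = 0 := by linear_combination hy
  rcases mul_eq_zero.mp e1 with h1 | h1
  · linarith [sub_eq_zero.mp h1]
  · rcases mul_eq_zero.mp e2 with h2 | h2
    · linarith [sub_eq_zero.mp h2]
    · exact absurd ⟨(sub_eq_zero.mp h1).symm, (sub_eq_zero.mp h2).symm⟩ hne

theorem lin_lt {LA LB c t : ℝ} (h1 : LA ≤ c) (h2 : LB ≤ c) (h3 : LA < c ∨ LB < c)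
    (ht0 : 0 < t) (ht1 : t < 1) : (1-t)*LA + t*LB < c := by
  rcases h3 with h | h
  · nlinarith
  · nlinarith

theorem seg_avoid {x1 y1 x2 y2 wx wy : ℝ} (a b c : ℝ)
    (h1 : a*x1 + b*y1 ≤ c) (h2 : a*x2 + b*y2 ≤ c)
    (h3 : a*x1 + b*y1 < c ∨ a*x2 + b*y2 < c) (hw : c ≤ a*wx + b*wy)
    {t : ℝ} (ht0 : 0 < t) (ht1 : t < 1) :
    ((1-t)*x1 + t*x2, (1-t)*y1 + t*y2) ≠ (wx, wy) := by
  intro h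
  have hx : (1-t)*x1 + t*x2 = wx := congrArg Prod.fst h
  have hy : (1-t)*y1 + t*y2 = wy := congrArg Prod.snd h
  have key : (1-t)*(a*x1 + b*y1) + t*(a*x2 + b*y2) = a*wx + b*wy := by
    rw [← hx, ← hy]; ring
  have hlt := lin_lt h1 h2 h3 ht0 ht1
  linarith

theorem seg_sep {x1 y1 x2 y2 x3 y3 x4 y4 : ℝ} (a b c : ℝ)
    (h1 : a*x1 + b*y1 ≤ c) (h2 : a*x2 + b*y2 ≤ c)
    (h3 : a*x1 + b*y1 < c ∨ a*x2 + b*y2 < c)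
    (h4 : c ≤ a*x3 + b*y3) (h5 : c ≤ a*x4 + b*y4)
    (h6 : c < a*x3 + b*y3 ∨ c < a*x4 + b*y4)
    {t r : ℝ} (ht0 : 0 < t) (ht1 : t < 1) (hr0 : 0 < r) (hr1 : r < 1) :
    ((1-t)*x1 + t*x2, (1-t)*y1 + t*y2) ≠ ((1-r)*x3 + r*x4, (1-r)*y3 + r*y4) := by
  intro h
  have hx : (1-t)*x1 + t*x2 = (1-r)*x3 + r*x4 := congrArg Prod.fst h
  have hy : (1-t)*y1 + t*y2 = (1-r)*y3 + r*y4 := congrArg Prod.snd h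
  have key : (1-t)*(a*x1 + b*y1) + t*(a*x2 + b*y2)
      = (1-r)*(a*x3 + b*y3) + r*(a*x4 + b*y4) := by
    linear_combination a * hx + b * hy
  have hlt := lin_lt h1 h2 h3 ht0 ht1
  have hgt : c < (1-r)*(a*x3 + b*y3) + r*(a*x4 + b*y4) := by
    rcases h6 with h | h
    · nlinarith
    · nlinarith
  linarith

/-! ### No cycles of length 3 or 4 -/

abbrev no4 (a b c d : Fin 11) : Prop :=
  a ≠ c → b ≠ d → ¬(adjB b c = true ∧ adjB d a = true)

set_option maxRecDepth 10000 in
theorem F3' : ∀ i : Fin 15, ∀ c : Fin 11,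
    ¬(adjB (e i).2 c = true ∧ adjB c (e i).1 = true) := by decide

set_option maxRecDepth 100000 in
set_option maxHeartbeats 2000000 in
theorem F4' : ∀ i j : Fin 15,
    no4 (e i).1 (e i).2 (e j).1 (e j).2 ∧ no4 (e i).1 (e i).2 (e j).2 (e j).1 ∧
    no4 (e i).2 (e i).1 (e j).1 (e j).2 ∧ no4 (e i).2 (e i).1 (e j).2 (e j).1 := by decide

theorem ex3 {V : Type*} {G : SimpleGraph V} {a : V} (w : G.Walk a a) (h : w.length = 3) :
    ∃ b c, G.Adj a b ∧ G.Adj b c ∧ G.Adj c a := by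
  cases w with
  | nil => simp at h
  | cons h1 p =>
    cases p with
    | nil => simp at h
    | cons h2 p =>
      cases p with
      | nil => simp at h
      | cons h3 p =>
        cases p with
        | nil => exact ⟨_, _, h1, h2, h3⟩
        | cons h4 p => simp only [SimpleGraph.Walk.length_cons] at h; omega

theorem ex4 {V : Type*} {G : SimpleGraph V} {a : V} (w : G.Walk a a) (hc : w.IsCycle)
    (h : w.length = 4) :
    ∃ b c d, a ≠ c ∧ b ≠ d ∧ G.Adj a b ∧ G.Adj b c ∧ G.Adj c d ∧ G.Adj d a := by
  cases w with
  | nil => simp at h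
  | cons h1 p =>
    cases p with
    | nil => simp at h
    | cons h2 p =>
      cases p with
      | nil => simp at h
      | cons h3 p =>
        cases p with
        | nil => simp at h
        | cons h4 p =>
          cases p with
          | nil =>
            have hn := hc.support_nodup
            simp [SimpleGraph.Walk.support_cons] at hn
            exact ⟨_, _, _, fun hh => hn.2.1.2 hh.symm, fun hh => hn.1.2.1 hh,
              h1, h2, h3, h4⟩
          | cons h5 p => simp only [SimpleGraph.Walk.length_cons] at h; omega

/-! ### The 5-cycle -/

def w5 : G11.Walk 0 0 :=
  .cons (show G11.Adj 0 2 by decide) (.cons (show G11.Adj 2 4 by decide)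
  (.cons (show G11.Adj 4 1 by decide) (.cons (show G11.Adj 1 5 by decide)
  (.cons (show G11.Adj 5 0 by decide) .nil))))

theorem w5cyc : w5.IsCycle := by
  refine ⟨⟨⟨?_⟩, ?_⟩, ?_⟩
  · decide
  · simp [w5]
  · decide

theorem girth5 : G11.girth = 5 := by
  have hub : G11.egirth ≤ 5 := by
    have h1 : G11.egirth ≤ (w5.length : ℕ∞) :=
      iInf_le_of_le 0 (iInf_le_of_le w5 (iInf_le _ w5cyc))
    simpa [show w5.length = 5 from rfl] using h1
  have hlb : (5 : ℕ∞) ≤ G11.egirth := by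
    rw [SimpleGraph.le_egirth]
    intro a w hw
    by_contra hlt
    push_neg at hlt
    have hl5 : w.length < 5 := by exact_mod_cast hlt
    have h3 : 3 ≤ w.length := hw.three_le_length
    have h34 : w.length = 3 ∨ w.length = 4 := by omega
    rcases h34 with hl | hl
    · obtain ⟨b, c, hab, hbc, hca⟩ := ex3 w hl
      obtain ⟨i, hi | hi⟩ := adj_cases a b hab
      · exact F3' i c ⟨by rw [hi]; exact hbc, by rw [hi]; exact hca⟩
      · exact F3' i c ⟨by rw [hi]; exact G11.adj_symm hca, by rw [hi]; exact G11.adj_symm hbc⟩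
    · obtain ⟨b, c, d, hac, hbd, hab, hbc, hcd, hda⟩ := ex4 w hw hl
      obtain ⟨i, hi | hi⟩ := adj_cases a b hab
      · obtain ⟨j, hj | hj⟩ := adj_cases c d hcd
        · have := (F4' i j).1; rw [hi, hj] at this
          exact this hac hbd ⟨hbc, hda⟩
        · have := (F4' i j).2.1; rw [hi, hj] at this
          exact this hac hbd ⟨hbc, hda⟩
      · obtain ⟨j, hj | hj⟩ := adj_cases c d hcd
        · have := (F4' i j).2.2.1; rw [hi, hj] at this
          exact this hac hbd ⟨hbc, hda⟩
        · have := (F4' i j).2.2.2; rw [hi, hj] at this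
          exact this hac hbd ⟨hbc, hda⟩
  have heg : G11.egirth = 5 := le_antisymm hub hlb
  rw [SimpleGraph.girth, heg]
  rfl

set_option maxRecDepth 10000 in
theorem maxdeg : G11.maxDegree = 4 := by decide

/-! ### The coloring lower bound -/

def l : Fin 7 → Fin 11 := ![0,1,2,3,5,6,7]

theorem linj : ∀ i j : Fin 7, l i = l j → i = j := by decide

set_option maxRecDepth 10000 in
theorem conf : ∀ i j : Fin 7, i ≠ j →
    (G11.Adj (l i) (l j) ∨ ∃ w, G11.Adj (l i) w ∧ G11.Adj w (l j)) := by decide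

/-! ### The drawing -/

def pt (v : Fin 11) : ℝ × ℝ := ((px v : ℝ), (py v : ℝ))

def seg (u v : Fin 11) (t : ℝ) : ℝ × ℝ :=
  ((1-t) * (px u : ℝ) + t * (px v : ℝ), (1-t) * (py u : ℝ) + t * (py v : ℝ))

theorem pt_inj : Function.Injective pt := by
  intro u v h
  have h1 : (px u : ℝ) = px v := congrArg Prod.fst h
  have h2 : (py u : ℝ) = py v := congrArg Prod.snd h
  exact pinj u v (by exact_mod_cast h1) (by exact_mod_cast h2)

theorem planar11 : IsPlanar G11 := by
  classical
  refine ⟨pt, seg, pt_inj, ?_, ?_⟩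
  · intro u v huv
    have hne : ¬((px u : ℝ) = (px v : ℝ) ∧ (py u : ℝ) = (py v : ℝ)) := by
      rintro ⟨hx, hy⟩
      exact G11.ne_of_adj huv (pinj u v (by exact_mod_cast hx) (by exact_mod_cast hy))
    refine ⟨?_, ?_, ?_, ?_, ?_, ?_⟩
    · exact Continuous.continuousOn (by unfold seg; fun_prop)
    · exact seg_injOn hne
    · unfold seg pt; norm_num
    · unfold seg pt; norm_num
    · intro t _; unfold seg; rw [Prod.mk.injEq]; constructor <;> ring
    · intro t ht w
      obtain ⟨i, hi | hi⟩ := adj_cases u v huv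
      · obtain ⟨h1, h2, h3, h4⟩ := factA' i w
        rw [hi] at h1 h2 h3
        refine seg_avoid ((certAf i w).1 : ℝ) ((certAf i w).2.1 : ℝ) ((certAf i w).2.2 : ℝ)
          ?_ ?_ ?_ ?_ ht.1 ht.2
        · exact_mod_cast h1
        · exact_mod_cast h2
        · rcases h3 with h | h
          · exact Or.inl (by exact_mod_cast h)
          · exact Or.inr (by exact_mod_cast h)
        · exact_mod_cast h4
      · obtain ⟨h1, h2, h3, h4⟩ := factA' i w
        rw [hi] at h1 h2 h3
        refine seg_avoid ((certAf i w).1 : ℝ) ((certAf i w).2.1 : ℝ) ((certAf i w).2.2 : ℝ)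
          ?_ ?_ ?_ ?_ ht.1 ht.2
        · exact_mod_cast h2
        · exact_mod_cast h1
        · rcases h3 with h | h
          · exact Or.inr (by exact_mod_cast h)
          · exact Or.inl (by exact_mod_cast h)
        · exact_mod_cast h4
  · intro u v x y huv hxy hne t ht r hr
    obtain ⟨i, hi⟩ := adj_cases u v huv
    obtain ⟨j, hj⟩ := adj_cases x y hxy
    have hij : i ≠ j := by
      rintro rfl
      rcases hi with hi | hi <;> rcases hj with hj | hj <;> rw [hi] at hj <;>
        injection hj with hl hr'
      · exact hne (by rw [hl, hr'])
      · exact hne (by rw [hl, hr']; exact Sym2.eq_swap)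
      · exact hne (by rw [← hl, ← hr']; exact Sym2.eq_swap)
      · exact hne (by rw [← hl, ← hr'])
    obtain ⟨h1, h2, h3, h4, h5, h6⟩ := factB' i j hij
    rcases hi with hi | hi <;> rcases hj with hj | hj <;> rw [hi] at h1 h2 h3 <;>
      rw [hj] at h4 h5 h6
    · refine seg_sep ((certBf i j).1 : ℝ) ((certBf i j).2.1 : ℝ) ((certBf i j).2.2 : ℝ)
        (by exact_mod_cast h1) (by exact_mod_cast h2) ?_
        (by exact_mod_cast h4) (by exact_mod_cast h5) ?_ ht.1 ht.2 hr.1 hr.2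
      · rcases h3 with h | h
        · exact Or.inl (by exact_mod_cast h)
        · exact Or.inr (by exact_mod_cast h)
      · rcases h6 with h | h
        · exact Or.inl (by exact_mod_cast h)
        · exact Or.inr (by exact_mod_cast h)
    · refine seg_sep ((certBf i j).1 : ℝ) ((certBf i j).2.1 : ℝ) ((certBf i j).2.2 : ℝ)
        (by exact_mod_cast h1) (by exact_mod_cast h2) ?_
        (by exact_mod_cast h5) (by exact_mod_cast h4) ?_ ht.1 ht.2 hr.1 hr.2
      · rcases h3 with h | h
        · exact Or.inl (by exact_mod_cast h)
        · exact Or.inr (by exact_mod_cast h)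
      · rcases h6 with h | h
        · exact Or.inr (by exact_mod_cast h)
        · exact Or.inl (by exact_mod_cast h)
    · refine seg_sep ((certBf i j).1 : ℝ) ((certBf i j).2.1 : ℝ) ((certBf i j).2.2 : ℝ)
        (by exact_mod_cast h2) (by exact_mod_cast h1) ?_
        (by exact_mod_cast h4) (by exact_mod_cast h5) ?_ ht.1 ht.2 hr.1 hr.2
      · rcases h3 with h | h
        · exact Or.inr (by exact_mod_cast h)
        · exact Or.inl (by exact_mod_cast h)
      · rcases h6 with h | h
        · exact Or.inl (by exact_mod_cast h)
        · exact Or.inr (by exact_mod_cast h)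
    · refine seg_sep ((certBf i j).1 : ℝ) ((certBf i j).2.1 : ℝ) ((certBf i j).2.2 : ℝ)
        (by exact_mod_cast h2) (by exact_mod_cast h1) ?_
        (by exact_mod_cast h5) (by exact_mod_cast h4) ?_ ht.1 ht.2 hr.1 hr.2
      · rcases h3 with h | h
        · exact Or.inr (by exact_mod_cast h)
        · exact Or.inl (by exact_mod_cast h)
      · rcases h6 with h | h
        · exact Or.inr (by exact_mod_cast h)
        · exact Or.inl (by exact_mod_cast h)

end TwoDistAux

/-- There exists a finite simple planar graph with maximum degree 4, girth 5, and
2-distance chromatic number at least 7. -/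

theorem exists_planar_maxDegree_four_girth_five_two_distance_seven :
    ∃ (V : Type) (iV : Fintype V) (G : SimpleGraph V) (iA : DecidableRel G.Adj),
      Finite V ∧ IsPlanar G ∧
      @SimpleGraph.maxDegree V G iV iA = 4 ∧ G.girth = 5 ∧
      ∀ (k : ℕ) (c : V → Fin k),
        (∀ u v, u ≠ v → (G.Adj u v ∨ ∃ w, G.Adj u w ∧ G.Adj w v) → c u ≠ c v) →
        7 ≤ k := by
  refine ⟨Fin 11, inferInstance, TwoDistAux.G11, TwoDistAux.iA11, inferInstance,
    TwoDistAux.planar11, TwoDistAux.maxdeg, TwoDistAux.girth5, ?_⟩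
  intro k c hc
  have hinj : Function.Injective fun i => c (TwoDistAux.l i) := by
    intro i j hcl
    by_contra hij
    have hll : TwoDistAux.l i ≠ TwoDistAux.l j := fun h => hij (TwoDistAux.linj i j h)
    exact hc _ _ hll (TwoDistAux.conf i j hij) hcl
  have := Fintype.card_le_of_injective _ hinj
  simpa using this
end

section
/- Let G be a minimal counterexample (fewest vertices) to the statement 'every graph with mad < 5/2, girth ≥ 10, and Δ = 4 satisfies χ²ₗ ≤ 6'. Then G contains no three consecutive vertices of degree 2, i.e., no path u-v-w where u, v, w all have degree 2 in G. -/
/-!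
Delete the path `u - v - w` and colour the rest by minimality: the induced subgraph inherits
`Δ ≤ 4`, the density bound and the girth bound, and because each of `u, v, w` has at most one
neighbour outside the path, distance two in the remaining graph is the same as in `G`. Each of
`u, w` has one outer neighbour of degree at most 4 and `v` none, so greedily colouring `u`, then
`w`, then `v` meets at most 4, 5 and 4 forbidden colours, fewer than the 6 available.
-/

open scoped Classical

open Finset

namespace SimpleGraph

variable {V W α : Type*}

/-- Adjacency in the square of `G`; it also holds for `x = y` as soon as `x` has a neighbour. -/
def SquareAdj (G : SimpleGraph V) (x y : V) : Prop :=
  G.Adj x y ∨ ∃ m, G.Adj x m ∧ G.Adj m y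

def IsSquareListColoring (G : SimpleGraph V) (L : V → Finset α) (φ : V → α) : Prop :=
  (∀ v, φ v ∈ L v) ∧ ∀ u v, u ≠ v → G.SquareAdj u v → φ u ≠ φ v

def IsSquareListColoringOn (G : SimpleGraph V) (L : V → Finset α) (S : Finset V) (φ : V → α) :
    Prop :=
  (∀ x ∈ S, φ x ∈ L x) ∧ ∀ x ∈ S, ∀ y ∈ S, x ≠ y → G.SquareAdj x y → φ x ≠ φ y

noncomputable def adjPairs (G : SimpleGraph V) (s : Finset V) : Finset (V × V) :=
  (s ×ˢ s).filter fun p => G.Adj p.1 p.2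

variable {G : SimpleGraph V} {H : SimpleGraph W}

theorem SquareAdj.symm {x y : V} : G.SquareAdj x y → G.SquareAdj y x
  | .inl h => .inl h.symm
  | .inr ⟨m, hxm, hmy⟩ => .inr ⟨m, hmy.symm, hxm.symm⟩

theorem squareAdj_iff_of_neighborFinset_eq_pair [Fintype V] {x y p q : V}
    (h : G.neighborFinset x = {p, q}) :
    G.SquareAdj x y ↔ y = p ∨ y = q ∨ G.Adj p y ∨ G.Adj q y := by
  have hx : ∀ m, G.Adj x m ↔ m = p ∨ m = q := fun m => by
    rw [← mem_neighborFinset, h, mem_insert, mem_singleton]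
  simp only [SquareAdj, hx, or_and_right, exists_or, exists_eq_left, or_assoc]

theorem neighborFinset_eq_pair [Fintype V] {x y z : V} (hy : G.Adj x y) (hz : G.Adj x z)
    (hyz : y ≠ z) (hx : G.degree x = 2) : G.neighborFinset x = {y, z} :=
  (eq_of_subset_of_card_le (by simp [insert_subset_iff, hy, hz])
    (by rw [card_pair hyz, card_neighborFinset_eq_degree, hx])).symm

theorem exists_neighborFinset_eq_pair [Fintype V] {x y : V} (hy : G.Adj x y)
    (hx : G.degree x = 2) : ∃ z, G.neighborFinset x = {y, z} := by
  obtain ⟨p, q, hpq, hN⟩ := card_eq_two.mp ((card_neighborFinset_eq_degree G x).trans hx)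
  have hyN : y ∈ G.neighborFinset x := (mem_neighborFinset G x y).mpr hy
  rw [hN, mem_insert, mem_singleton] at hyN
  rcases hyN with rfl | rfl
  · exact ⟨q, hN⟩
  · exact ⟨p, hN.trans (pair_comm _ _)⟩

theorem card_insert_erase_neighborFinset_le [Fintype V] {a u : V} (h : G.Adj a u) :
    #(insert a ((G.neighborFinset a).erase u)) ≤ G.maxDegree := by
  calc #(insert a ((G.neighborFinset a).erase u))
      ≤ #((G.neighborFinset a).erase u) + 1 := card_insert_le _ _
    _ = G.degree a := by
      rw [card_erase_add_one ((mem_neighborFinset G a u).mpr h), card_neighborFinset_eq_degree]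
    _ ≤ G.maxDegree := G.degree_le_maxDegree a

theorem Copy.card_adjPairs_le (f : Copy H G) (s : Finset W) :
    #(H.adjPairs s) ≤ #(G.adjPairs (s.map f.toEmbedding)) := by
  refine card_le_card_of_injOn (Prod.map f f) (fun p hp => ?_) ?_
  · simp only [adjPairs, coe_filter, mem_product, Set.mem_ofPred_eq] at hp
    simp only [adjPairs, coe_filter, mem_product, mem_map, Set.mem_ofPred_eq]
    exact ⟨⟨⟨_, hp.1.1, rfl⟩, ⟨_, hp.1.2, rfl⟩⟩, f.toHom.map_adj hp.2⟩
  · exact (f.injective.prodMap f.injective).injOn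

theorem Copy.forall_mul_card_adjPairs_lt (f : Copy H G) {p q : ℕ}
    (hG : ∀ s : Finset V, s.Nonempty → p * #(G.adjPairs s) < q * #s) (s : Finset W)
    (hs : s.Nonempty) : p * #(H.adjPairs s) < q * #s := by
  have := hG _ (hs.map (f := f.toEmbedding))
  rw [card_map] at this
  exact lt_of_le_of_lt (Nat.mul_le_mul_left p (f.card_adjPairs_le s)) this

theorem isSquareListColoringOn_univ [Fintype V] {L : V → Finset α} {φ : V → α} :
    G.IsSquareListColoringOn L univ φ ↔ G.IsSquareListColoring L φ := by
  simp [IsSquareListColoringOn, IsSquareListColoring]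

theorem IsSquareListColoringOn.exists_update {L : V → Finset α} {S T : Finset V} {φ : V → α}
    {x : V} (hφ : G.IsSquareListColoringOn L S φ) (hT : ∀ y ∈ S, G.SquareAdj x y → y ∈ T)
    (hcard : #T < #(L x)) :
    ∃ c, G.IsSquareListColoringOn L (insert x S) (Function.update φ x c) := by
  obtain ⟨c, hcL, hcT⟩ := exists_mem_notMem_of_card_lt_card (card_image_le.trans_lt hcard)
  have hc : ∀ y ∈ insert x S, y ≠ x → G.SquareAdj x y → c ≠ φ y := fun y hy hyx hxy heq =>
    hcT (heq ▸ mem_image_of_mem φ (hT y ((mem_insert.mp hy).resolve_left hyx) hxy))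
  refine ⟨c, fun y hy => ?_, fun y hy z hz hyz hadj => ?_⟩
  · rcases eq_or_ne y x with rfl | hyx
    · simpa using hcL
    · simpa [hyx] using hφ.1 y ((mem_insert.mp hy).resolve_left hyx)
  · rcases eq_or_ne y x with rfl | hyx
    · simpa [hyz.symm] using hc z hz hyz.symm hadj
    rcases eq_or_ne z x with rfl | hzx
    · simpa [hyx] using (hc y hy hyx hadj.symm).symm
    simpa [hyx, hzx] using hφ.2 y ((mem_insert.mp hy).resolve_left hyx) z
      ((mem_insert.mp hz).resolve_left hzx) hyz hadj

/-- A vertex outside `s` with at most one neighbour in `s` is not the middle of a path of length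
two between distinct vertices of `s`, so `G` and `G.induce s` have the same square on `s`. -/
theorem exists_isSquareListColoringOn_of_induce [Inhabited α] {L : V → Finset α} {s : Finset V}
    (hs : ∀ m ∉ s, (G.neighborSet m ∩ s).Subsingleton) {ψ : ↥(s : Set V) → α}
    (hψ : (G.induce s).IsSquareListColoring (fun x => L x) ψ) :
    ∃ φ, G.IsSquareListColoringOn L s φ := by
  refine ⟨fun x => if h : x ∈ s then ψ ⟨x, h⟩ else default, fun x hx => ?_,
    fun x hx y hy hxy hadj => ?_⟩
  · simpa [hx] using hψ.1 ⟨x, hx⟩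
  simp only [hx, hy, dite_true]
  refine hψ.2 ⟨x, hx⟩ ⟨y, hy⟩ (by simpa using hxy) ?_
  rcases hadj with h | ⟨m, hxm, hmy⟩
  · exact .inl h
  by_cases hm : m ∈ s
  · exact .inr ⟨⟨m, hm⟩, hxm, hmy⟩
  exact absurd (hs m hm ⟨hxm.symm, hx⟩ ⟨hmy, hy⟩) hxy

section DegreeTwoPath

variable [Fintype V] {L : V → Finset α} {u v w a b : V}
  (hNu : G.neighborFinset u = {v, a}) (hNv : G.neighborFinset v = {u, w})
  (hNw : G.neighborFinset w = {v, b})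
include hNu hNv hNw

theorem subsingleton_neighborSet_inter_compl_path :
    ∀ m ∉ ({u, v, w}ᶜ : Finset V), (G.neighborSet m ∩ ↑({u, v, w}ᶜ : Finset V)).Subsingleton := by
  intro m hm x ⟨hmx, hx⟩ y ⟨hmy, hy⟩
  rw [mem_compl, not_not] at hm
  simp only [mem_insert, mem_singleton] at hm
  simp only [coe_compl, Set.mem_compl_iff, mem_coe, mem_insert, mem_singleton, not_or] at hx hy
  rw [mem_neighborSet, ← mem_neighborFinset] at hmx hmy
  rcases hm with rfl | rfl | rfl <;>
    simp only [hNu, hNv, hNw, mem_insert, mem_singleton] at hmx hmy <;> grind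

theorem IsSquareListColoringOn.extend_over_degree_two_path {φ : V → α} (hΔ : G.maxDegree ≤ 4)
    (hL : ∀ x, 6 ≤ #(L x)) (hφ : G.IsSquareListColoringOn L {u, v, w}ᶜ φ) :
    ∃ χ, G.IsSquareListColoringOn L univ χ := by
  have hau : G.Adj a u := ((mem_neighborFinset G u a).mp (by simp [hNu])).symm
  have hbw : G.Adj b w := ((mem_neighborFinset G w b).mp (by simp [hNw])).symm
  have hsq : ∀ {x y p q}, G.neighborFinset x = {p, q} → G.SquareAdj x y →
      y = p ∨ y = q ∨ y ∈ G.neighborFinset p ∨ y ∈ G.neighborFinset q := fun h hxy => by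
    simpa only [mem_neighborFinset] using (squareAdj_iff_of_neighborFinset_eq_pair h).mp hxy
  obtain ⟨cu, hu⟩ := hφ.exists_update (x := u) (T := insert a ((G.neighborFinset a).erase u))
    (fun y hy hadj => by
      have := hsq hNu hadj
      simp only [hNv, mem_compl, mem_insert, mem_singleton, mem_erase] at hy this ⊢
      tauto)
    (by have := card_insert_erase_neighborFinset_le hau; have := hL u; omega)
  obtain ⟨cw, hw⟩ := hu.exists_update (x := w)
    (T := insert u (insert b ((G.neighborFinset b).erase w)))
    (fun y hy hadj => by
      have := hsq hNw hadj
      simp only [hNv, mem_compl, mem_insert, mem_singleton, mem_erase] at hy this ⊢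
      tauto)
    (by
      have := card_insert_le u (insert b ((G.neighborFinset b).erase w))
      have := card_insert_erase_neighborFinset_le hbw
      have := hL w
      omega)
  obtain ⟨cv, hv⟩ := hw.exists_update (x := v) (T := {u, w, a, b})
    (fun y hy hadj => by
      have := hsq hNv hadj
      simp only [hNu, hNw, mem_compl, mem_insert, mem_singleton] at hy this ⊢
      tauto)
    (card_le_four.trans_lt (by have := hL v; omega))
  have huniv : insert v (insert w (insert u ({u, v, w}ᶜ : Finset V))) = univ := by
    ext y
    simp only [mem_univ, mem_insert, mem_compl, mem_singleton, iff_true]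
    tauto
  exact ⟨_, huniv ▸ hv⟩

end DegreeTwoPath

end SimpleGraph

open SimpleGraph

/-- A minimal (fewest vertices) counterexample `G` to "every graph with `mad < 5/2`,
girth at least 10, and `Δ = 4` satisfies `χ²ₗ ≤ 6`" contains no three consecutive
vertices of degree 2: there is no path `u - v - w` with `d(u) = d(v) = d(w) = 2`. -/
theorem minimal_counterexample_no_three_consecutive_degree_two
    {V : Type} [Fintype V] (G : SimpleGraph V)
    (hΔ : G.maxDegree = 4)
    (hmad : ∀ s : Finset V, s.Nonempty →
      2 * ((s ×ˢ s).filter fun p => G.Adj p.1 p.2).card < 5 * s.card)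
    (hgirth : 10 ≤ G.egirth)
    (hbad : ∃ L : V → Finset ℕ, (∀ v, 6 ≤ (L v).card) ∧
      ¬ ∃ φ : V → ℕ, (∀ v, φ v ∈ L v) ∧
        ∀ u v, u ≠ v → (G.Adj u v ∨ ∃ w, G.Adj u w ∧ G.Adj w v) → φ u ≠ φ v)
    (hmin : ∀ (W : Type) [Fintype W] (H : SimpleGraph W),
      Fintype.card W < Fintype.card V →
      H.maxDegree ≤ 4 →
      (∀ s : Finset W, s.Nonempty →
        2 * ((s ×ˢ s).filter fun p => H.Adj p.1 p.2).card < 5 * s.card) →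
      10 ≤ H.egirth →
      ∀ L : W → Finset ℕ, (∀ v, 6 ≤ (L v).card) →
        ∃ φ : W → ℕ, (∀ v, φ v ∈ L v) ∧
          ∀ u v, u ≠ v → (H.Adj u v ∨ ∃ w, H.Adj u w ∧ H.Adj w v) → φ u ≠ φ v) :
    ∀ u v w : V, G.Adj u v → G.Adj v w → u ≠ w →
      ¬(G.degree u = 2 ∧ G.degree v = 2 ∧ G.degree w = 2) := by
  rintro u v w huv hvw huw ⟨hdu, hdv, hdw⟩
  obtain ⟨L, hL, hnoc⟩ := hbad
  obtain ⟨a, hNu⟩ := G.exists_neighborFinset_eq_pair huv hdu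
  obtain ⟨b, hNw⟩ := G.exists_neighborFinset_eq_pair hvw.symm hdw
  have hNv := G.neighborFinset_eq_pair huv.symm hvw huw hdv
  set s : Finset V := {u, v, w}ᶜ
  let e : G.induce s ↪g G := Embedding.induce (s : Set V)
  obtain ⟨ψ, hψ⟩ := hmin (s : Set V) (G.induce (s : Set V))
    (Fintype.card_subtype_lt (x := u) (by simp [s]))
    (hΔ ▸ e.toCopy.maxDegree_mono) (e.toCopy.forall_mul_card_adjPairs_lt hmad)
    (hgirth.trans e.isContained.egirth_le) (fun x => L x) (fun x => hL x)
  obtain ⟨φ, hφ⟩ := exists_isSquareListColoringOn_of_induce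
    (subsingleton_neighborSet_inter_compl_path hNu hNv hNw) hψ
  obtain ⟨χ, hχ⟩ := hφ.extend_over_degree_two_path hNu hNv hNw hΔ.le hL
  exact hnoc ⟨χ, isSquareListColoringOn_univ.mp hχ⟩
end
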